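/- arXiv:math/0310285 — 5 statements merged into one kernel-verified Lean document; each statement's English description precedes it below -/
import Mathlib

section
/- Euler's summation formula in two variables: Let a, b, c, d be integers with a < b and c < d, and let f : ℝ² → ℂ have continuous partial derivatives up to second order on the rectangle [a,b] × [c,d]. Then Σ_{c < n ≤ d} Σ_{a < m ≤ b} f(m,n) = ∫_a^b ∫_c^d f(x,y) dx dy + ∫_a^b ∫_c^d f_x(x,y)·(x − ⌊x⌋) dx dy + ∫_a^b ∫_c^d f_y(x,y)·(y − ⌊y⌋) dx dy + ∫_a^b ∫_c^d f_{xy}(x,y)·(x − ⌊x⌋)·(y − ⌊y⌋) dx dy, where m, n range over integers. -/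
open MeasureTheory intervalIntegral

/-- The complex-valued fractional part `x - ⌊x⌋`. -/
noncomputable def frC : ℝ → ℂ := fun x => ((x - ⌊x⌋ : ℝ) : ℂ)

lemma frC_def (x : ℝ) : ((x - ⌊x⌋ : ℝ) : ℂ) = frC x := rfl

lemma frC_eq (x : ℝ) : frC x = ((Int.fract x : ℝ) : ℂ) := by
  simp [frC, Int.self_sub_floor]

lemma frC_meas : Measurable frC := by
  have : frC = fun x => ((Int.fract x : ℝ) : ℂ) := funext frC_eq
  rw [this]
  exact Complex.measurable_ofReal.comp measurable_fract

lemma frC_norm_le (x : ℝ) : ‖frC x‖ ≤ 1 := by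
  rw [frC_eq]
  simp only [Complex.norm_real, Real.norm_eq_abs]
  rw [abs_of_nonneg (Int.fract_nonneg x)]
  exact (Int.fract_lt_one x).le

/-- interval integrability from a.e. measurability plus a bound -/
lemma II {u v : ℝ} {g : ℝ → ℂ}
    (hm : AEStronglyMeasurable g (volume.restrict (Set.uIoc u v))) {C : ℝ}
    (hb : ∀ x ∈ Set.uIoc u v, ‖g x‖ ≤ C) : IntervalIntegrable g volume u v := by
  rw [intervalIntegrable_iff]
  exact ⟨hm, HasFiniteIntegral.restrict_of_bounded (C := C) measure_Ioc_lt_top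
    (ae_restrict_of_forall_mem measurableSet_uIoc hb)⟩

/-- product of a continuous function with `frC` is interval integrable -/
lemma fractII {u v : ℝ} {φ : ℝ → ℂ} (hφ : ContinuousOn φ (Set.uIcc u v)) :
    IntervalIntegrable (fun x => φ x * frC x) volume u v := by
  obtain ⟨C, hC⟩ := (isCompact_uIcc).exists_bound_of_continuousOn hφ
  refine II ?_ (C := C * 1) fun x hx => ?_
  · exact ((hφ.aestronglyMeasurable measurableSet_uIcc).mono_measure
      (Measure.restrict_mono Set.uIoc_subset_uIcc le_rfl)).mul
      (frC_meas.aestronglyMeasurable)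
  · rw [norm_mul]
    exact mul_le_mul (hC x (Set.uIoc_subset_uIcc hx)) (frC_norm_le x)
      (norm_nonneg _) ((norm_nonneg _).trans (hC x (Set.uIoc_subset_uIcc hx)))

/-- Euler summation on a single unit interval `[k, k+1]`. -/
lemma euler_step (k : ℤ) (g g' : ℝ → ℂ)
    (hg : ∀ x ∈ Set.Icc (k : ℝ) (k + 1), HasDerivWithinAt g (g' x) (Set.Icc (k : ℝ) (k + 1)) x)
    (hg' : ContinuousOn g' (Set.Icc (k : ℝ) (k + 1))) :
    g (k + 1) = (∫ x in (k : ℝ)..(k + 1), g x) + ∫ x in (k : ℝ)..(k + 1), g' x * frC x := by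
  have hle : (k : ℝ) ≤ k + 1 := by linarith
  have huIcc : Set.uIcc (k : ℝ) (k + 1) = Set.Icc (k : ℝ) (k + 1) := Set.uIcc_of_le hle
  have hgc : ContinuousOn g (Set.Icc (k : ℝ) (k + 1)) :=
    fun x hx => (hg x hx).continuousWithinAt
  have hv : ∀ x : ℝ, HasDerivAt (fun t : ℝ => ((t : ℂ) - (k : ℂ))) 1 x := by
    intro x
    simpa using (Complex.ofRealCLM.hasDerivAt (x := x)).sub_const (k : ℂ)
  have hint1 : IntervalIntegrable (fun x => g' x * ((x : ℂ) - (k : ℂ)) + g x) volume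
      (k : ℝ) (k + 1) := by
    apply ContinuousOn.intervalIntegrable
    rw [huIcc]
    exact (hg'.mul ((Complex.continuous_ofReal.sub continuous_const).continuousOn)).add hgc
  have key : (∫ x in (k : ℝ)..(k + 1), (g' x * ((x : ℂ) - (k : ℂ)) + g x))
      = g (k + 1) := by
    have := integral_eq_sub_of_hasDeriv_right_of_le hle
      (f := fun x => g x * ((x : ℂ) - (k : ℂ)))
      (f' := fun x => g' x * ((x : ℂ) - (k : ℂ)) + g x)
      (hgc.mul ((Complex.continuous_ofReal.sub continuous_const).continuousOn))
      (fun x hx => by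
        have hx' : x ∈ Set.Icc (k : ℝ) (k + 1) := Set.Ioo_subset_Icc_self hx
        have hd : HasDerivAt g (g' x) x :=
          (hg x hx').hasDerivAt (Icc_mem_nhds hx.1 hx.2)
        have := hd.mul (hv x)
        simp only [mul_one] at this
        exact this.hasDerivWithinAt)
      hint1
    rw [this]
    push_cast
    ring_nf
  have hint2 : IntervalIntegrable (fun x => g' x * ((x : ℂ) - (k : ℂ))) volume (k : ℝ) (k + 1) := by
    apply ContinuousOn.intervalIntegrable
    rw [huIcc]
    exact hg'.mul ((Complex.continuous_ofReal.sub continuous_const).continuousOn)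
  have hint3 : IntervalIntegrable g volume (k : ℝ) (k + 1) := by
    apply ContinuousOn.intervalIntegrable; rw [huIcc]; exact hgc
  rw [integral_add hint2 hint3] at key
  have hcongr : (∫ x in (k : ℝ)..(k + 1), g' x * frC x)
      = ∫ x in (k : ℝ)..(k + 1), g' x * ((x : ℂ) - (k : ℂ)) := by
    apply intervalIntegral.integral_congr_ae
    have h0 : (volume : Measure ℝ) {(k : ℝ) + 1} = 0 := measure_singleton _
    filter_upwards [measure_eq_zero_iff_ae_notMem.mp h0] with x hx hmem
    rw [Set.uIoc_of_le hle] at hmem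
    have hne : x ≠ (k : ℝ) + 1 := by simpa using hx
    have hlt : x < (k : ℝ) + 1 := lt_of_le_of_ne hmem.2 hne
    have hfl : (⌊x⌋ : ℤ) = k := Int.floor_eq_iff.mpr ⟨hmem.1.le, by push_cast; linarith⟩
    simp [frC, hfl]
  rw [hcongr, ← key]
  ring

/-- One-variable Euler summation formula. -/
lemma euler1 (a : ℤ) (g g' : ℝ → ℂ) (b : ℤ) (hab : a + 1 ≤ b)
    (hg : ∀ x ∈ Set.Icc (a : ℝ) b, HasDerivWithinAt g (g' x) (Set.Icc (a : ℝ) b) x)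
    (hg' : ContinuousOn g' (Set.Icc (a : ℝ) b)) :
    ∑ n ∈ Finset.Ioc a b, g n
      = (∫ x in (a : ℝ)..b, g x) + ∫ x in (a : ℝ)..b, g' x * frC x := by
  revert hg hg'
  refine Int.le_induction (motive := fun b _ =>
      (∀ x ∈ Set.Icc (a : ℝ) b, HasDerivWithinAt g (g' x) (Set.Icc (a : ℝ) b) x) →
      ContinuousOn g' (Set.Icc (a : ℝ) b) →
      ∑ n ∈ Finset.Ioc a b, g n
        = (∫ x in (a : ℝ)..b, g x) + ∫ x in (a : ℝ)..b, g' x * frC x) ?_ ?_ b hab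
  · intro hg hg'
    have hc : ((a + 1 : ℤ) : ℝ) = (a : ℝ) + 1 := by push_cast; ring
    rw [hc] at hg hg' ⊢
    have hs : Finset.Ioc a (a + 1) = {a + 1} := by
      ext n; simp only [Finset.mem_Ioc, Finset.mem_singleton]; omega
    rw [hs, Finset.sum_singleton, hc]
    exact euler_step a g g' hg hg'
  · intro b hb ih hg hg'
    have hc : ((b + 1 : ℤ) : ℝ) = (b : ℝ) + 1 := by push_cast; ring
    rw [hc] at hg hg' ⊢
    have hab' : (a : ℝ) ≤ b := by exact_mod_cast (by omega : a ≤ b)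
    have sub1 : Set.Icc (a : ℝ) b ⊆ Set.Icc (a : ℝ) ((b : ℝ) + 1) :=
      Set.Icc_subset_Icc le_rfl (by linarith)
    have sub2 : Set.Icc (b : ℝ) ((b : ℝ) + 1) ⊆ Set.Icc (a : ℝ) ((b : ℝ) + 1) :=
      Set.Icc_subset_Icc hab' le_rfl
    have ihc := ih (fun x hx => (hg x (sub1 hx)).mono sub1) (hg'.mono sub1)
    have step := euler_step b g g' (fun x hx => (hg x (sub2 hx)).mono sub2) (hg'.mono sub2)
    have hgc : ContinuousOn g (Set.Icc (a : ℝ) ((b : ℝ) + 1)) :=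
      fun x hx => (hg x hx).continuousWithinAt
    have i1 : IntervalIntegrable g volume (a : ℝ) b := by
      apply ContinuousOn.intervalIntegrable
      rw [Set.uIcc_of_le hab']; exact hgc.mono sub1
    have i2 : IntervalIntegrable g volume (b : ℝ) ((b : ℝ) + 1) := by
      apply ContinuousOn.intervalIntegrable
      rw [Set.uIcc_of_le (by linarith : (b:ℝ) ≤ (b:ℝ)+1)]; exact hgc.mono sub2
    have i3 : IntervalIntegrable (fun x => g' x * frC x) volume (a : ℝ) b :=
      fractII (by rw [Set.uIcc_of_le hab']; exact hg'.mono sub1)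
    have i4 : IntervalIntegrable (fun x => g' x * frC x) volume (b : ℝ) ((b : ℝ) + 1) :=
      fractII (by rw [Set.uIcc_of_le (by linarith : (b:ℝ) ≤ (b:ℝ)+1)]; exact hg'.mono sub2)
    have hsum : ∑ n ∈ Finset.Ioc a (b + 1), g (n : ℝ)
        = (∑ n ∈ Finset.Ioc a b, g (n : ℝ)) + g ((b : ℝ) + 1) := by
      have : Finset.Ioc a (b + 1) = insert (b + 1) (Finset.Ioc a b) := by
        ext n; simp only [Finset.mem_Ioc, Finset.mem_insert]; omega
      rw [this, Finset.sum_insert (by simp [Finset.mem_Ioc]), add_comm]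
      norm_num
    rw [hsum, ihc, step,
      ← intervalIntegral.integral_add_adjacent_intervals i1 i2,
      ← intervalIntegral.integral_add_adjacent_intervals i3 i4]
    ring

lemma sliceX {F : ℝ → ℝ → ℂ} {A B : Set ℝ}
    (hF : ContinuousOn (fun p : ℝ × ℝ => F p.1 p.2) (A ×ˢ B)) {y : ℝ} (hy : y ∈ B) :
    ContinuousOn (fun x => F x y) A :=
  hF.comp ((continuous_id.prodMk continuous_const).continuousOn) (fun x hx => ⟨hx, hy⟩)

lemma sliceY {F : ℝ → ℝ → ℂ} {A B : Set ℝ}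
    (hF : ContinuousOn (fun p : ℝ × ℝ => F p.1 p.2) (A ×ˢ B)) {x : ℝ} (hx : x ∈ A) :
    ContinuousOn (fun y => F x y) B :=
  hF.comp ((continuous_const.prodMk continuous_id).continuousOn) (fun y hy => ⟨hx, hy⟩)

/-- continuity of a parametric interval integral with a bounded measurable weight -/
lemma contParamW {a b c d : ℝ} (hcd : c ≤ d) {G : ℝ → ℝ → ℂ}
    (hG : ContinuousOn (fun p : ℝ × ℝ => G p.1 p.2) (Set.Icc a b ×ˢ Set.Icc c d))
    {w : ℝ → ℂ} (hw : Measurable w) (hw1 : ∀ y, ‖w y‖ ≤ 1) :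
    ContinuousOn (fun x => ∫ y in c..d, G x y * w y) (Set.Icc a b) := by
  obtain ⟨C, hC⟩ := (isCompact_Icc.prod isCompact_Icc).exists_bound_of_continuousOn hG
  have hsub : Set.uIoc c d ⊆ Set.Icc c d := by
    rw [Set.uIoc_of_le hcd]; exact Set.Ioc_subset_Icc_self
  intro x0 hx0
  apply intervalIntegral.continuousWithinAt_of_dominated_interval (bound := fun _ => C)
  · filter_upwards [self_mem_nhdsWithin] with x hx
    exact (((sliceY hG hx).aestronglyMeasurable measurableSet_Icc).mono_measure
      (Measure.restrict_mono hsub le_rfl)).mul hw.aestronglyMeasurable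
  · filter_upwards [self_mem_nhdsWithin] with x hx
    apply Filter.Eventually.of_forall
    intro y hy
    calc ‖G x y * w y‖ = ‖G x y‖ * ‖w y‖ := norm_mul _ _
      _ ≤ C * 1 := mul_le_mul (hC (x, y) ⟨hx, hsub hy⟩) (hw1 y) (norm_nonneg _)
          ((norm_nonneg _).trans (hC (x, y) ⟨hx, hsub hy⟩))
      _ = C := mul_one C
  · exact intervalIntegrable_const
  · apply Filter.Eventually.of_forall
    intro y hy
    exact (((sliceX hG (hsub hy)).mul continuousOn_const) x0 hx0)

/-- Euler's summation formula in two variables. -/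
theorem euler_summation_two_variables
    (a b c d : ℤ) (hab : a < b) (hcd : c < d)
    (f fx fy fxx fyy fxy : ℝ → ℝ → ℂ)
    (hfx : ∀ x ∈ Set.Icc (a : ℝ) b, ∀ y ∈ Set.Icc (c : ℝ) d,
      HasDerivWithinAt (fun t => f t y) (fx x y) (Set.Icc (a : ℝ) b) x)
    (hfy : ∀ x ∈ Set.Icc (a : ℝ) b, ∀ y ∈ Set.Icc (c : ℝ) d,
      HasDerivWithinAt (fun s => f x s) (fy x y) (Set.Icc (c : ℝ) d) y)
    (hfxx : ∀ x ∈ Set.Icc (a : ℝ) b, ∀ y ∈ Set.Icc (c : ℝ) d,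
      HasDerivWithinAt (fun t => fx t y) (fxx x y) (Set.Icc (a : ℝ) b) x)
    (hfyy : ∀ x ∈ Set.Icc (a : ℝ) b, ∀ y ∈ Set.Icc (c : ℝ) d,
      HasDerivWithinAt (fun s => fy x s) (fyy x y) (Set.Icc (c : ℝ) d) y)
    (hfxy : ∀ x ∈ Set.Icc (a : ℝ) b, ∀ y ∈ Set.Icc (c : ℝ) d,
      HasDerivWithinAt (fun s => fx x s) (fxy x y) (Set.Icc (c : ℝ) d) y)
    (hfc : ContinuousOn (fun p : ℝ × ℝ => f p.1 p.2) (Set.Icc (a : ℝ) b ×ˢ Set.Icc (c : ℝ) d))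
    (hfxc : ContinuousOn (fun p : ℝ × ℝ => fx p.1 p.2) (Set.Icc (a : ℝ) b ×ˢ Set.Icc (c : ℝ) d))
    (hfyc : ContinuousOn (fun p : ℝ × ℝ => fy p.1 p.2) (Set.Icc (a : ℝ) b ×ˢ Set.Icc (c : ℝ) d))
    (hfxxc : ContinuousOn (fun p : ℝ × ℝ => fxx p.1 p.2) (Set.Icc (a : ℝ) b ×ˢ Set.Icc (c : ℝ) d))
    (hfyyc : ContinuousOn (fun p : ℝ × ℝ => fyy p.1 p.2) (Set.Icc (a : ℝ) b ×ˢ Set.Icc (c : ℝ) d))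
    (hfxyc : ContinuousOn (fun p : ℝ × ℝ => fxy p.1 p.2) (Set.Icc (a : ℝ) b ×ˢ Set.Icc (c : ℝ) d)) :
    ∑ n ∈ Finset.Ioc c d, ∑ m ∈ Finset.Ioc a b, f (m : ℝ) (n : ℝ)
      = (∫ x in (a : ℝ)..(b : ℝ), ∫ y in (c : ℝ)..(d : ℝ), f x y)
        + (∫ x in (a : ℝ)..(b : ℝ), ∫ y in (c : ℝ)..(d : ℝ),
            fx x y * ((x - ⌊x⌋ : ℝ) : ℂ))
        + (∫ x in (a : ℝ)..(b : ℝ), ∫ y in (c : ℝ)..(d : ℝ),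
            fy x y * ((y - ⌊y⌋ : ℝ) : ℂ))
        + (∫ x in (a : ℝ)..(b : ℝ), ∫ y in (c : ℝ)..(d : ℝ),
            fxy x y * ((x - ⌊x⌋ : ℝ) : ℂ) * ((y - ⌊y⌋ : ℝ) : ℂ)) := by
  simp only [frC_def]
  have habR : (a : ℝ) ≤ b := by exact_mod_cast hab.le
  have hcdR : (c : ℝ) ≤ d := by exact_mod_cast hcd.le
  have huab : Set.uIcc (a : ℝ) (b : ℝ) = Set.Icc (a : ℝ) b := Set.uIcc_of_le habR
  have hucd : Set.uIcc (c : ℝ) (d : ℝ) = Set.Icc (c : ℝ) d := Set.uIcc_of_le hcdR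
  set P : ℝ → ℂ := fun x => ∫ y in (c : ℝ)..(d : ℝ), f x y with hPdef
  set Q : ℝ → ℂ := fun x => ∫ y in (c : ℝ)..(d : ℝ), fy x y * frC y with hQdef
  set R : ℝ → ℂ := fun x => ∫ y in (c : ℝ)..(d : ℝ), fx x y with hRdef
  set S : ℝ → ℂ := fun x => ∫ y in (c : ℝ)..(d : ℝ), fxy x y * frC y with hSdef
  have hPc : ContinuousOn P (Set.Icc (a : ℝ) b) := by
    have := contParamW hcdR hfc (w := fun _ => (1 : ℂ)) measurable_const (by simp)
    simpa only [mul_one] using this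
  have hQc : ContinuousOn Q (Set.Icc (a : ℝ) b) := contParamW hcdR hfyc frC_meas frC_norm_le
  have hRc : ContinuousOn R (Set.Icc (a : ℝ) b) := by
    have := contParamW hcdR hfxc (w := fun _ => (1 : ℂ)) measurable_const (by simp)
    simpa only [mul_one] using this
  have hSc : ContinuousOn S (Set.Icc (a : ℝ) b) := contParamW hcdR hfxyc frC_meas frC_norm_le
  -- step 1: Euler summation in the first variable, for each fixed n
  have memN : ∀ n ∈ Finset.Ioc c d, (n : ℝ) ∈ Set.Icc (c : ℝ) d := by
    intro n hn
    rw [Finset.mem_Ioc] at hn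
    constructor
    · exact_mod_cast hn.1.le
    · exact_mod_cast hn.2
  have step1 : ∀ n ∈ Finset.Ioc c d, ∑ m ∈ Finset.Ioc a b, f (m : ℝ) (n : ℝ)
      = (∫ x in (a : ℝ)..(b : ℝ), f x n) + ∫ x in (a : ℝ)..(b : ℝ), fx x n * frC x := by
    intro n hn
    exact euler1 a _ _ b (by omega) (fun x hx => hfx x hx n (memN n hn))
      (sliceX hfxc (memN n hn))
  rw [Finset.sum_congr rfl step1, Finset.sum_add_distrib]
  -- interchange finite sums and integrals
  have intf : ∀ n ∈ Finset.Ioc c d,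
      IntervalIntegrable (fun x => f x (n : ℝ)) volume (a : ℝ) (b : ℝ) := by
    intro n hn
    apply ContinuousOn.intervalIntegrable
    rw [huab]; exact sliceX hfc (memN n hn)
  have intfx : ∀ n ∈ Finset.Ioc c d,
      IntervalIntegrable (fun x => fx x (n : ℝ) * frC x) volume (a : ℝ) (b : ℝ) := by
    intro n hn
    exact fractII (by rw [huab]; exact sliceX hfxc (memN n hn))
  rw [← intervalIntegral.integral_finset_sum intf,
    ← intervalIntegral.integral_finset_sum intfx]
  -- step 2: Euler summation in the second variable, under the integral sign
  have e1 : (∫ x in (a : ℝ)..(b : ℝ), ∑ n ∈ Finset.Ioc c d, f x (n : ℝ))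
      = ∫ x in (a : ℝ)..(b : ℝ), (P x + Q x) := by
    apply intervalIntegral.integral_congr
    intro x hx
    rw [huab] at hx
    exact euler1 c (f x) (fy x) d (by omega) (fun y hy => hfy x hx y hy) (sliceY hfyc hx)
  have e2 : (∫ x in (a : ℝ)..(b : ℝ), ∑ n ∈ Finset.Ioc c d, fx x (n : ℝ) * frC x)
      = ∫ x in (a : ℝ)..(b : ℝ), (R x + S x) * frC x := by
    apply intervalIntegral.integral_congr
    intro x hx
    rw [huab] at hx
    beta_reduce
    rw [← Finset.sum_mul]
    congr 1
    exact euler1 c (fx x) (fxy x) d (by omega) (fun y hy => hfxy x hx y hy) (sliceY hfxyc hx)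
  rw [e1, e2]
  -- split the integrals
  have hPint : IntervalIntegrable P volume (a : ℝ) (b : ℝ) := by
    apply ContinuousOn.intervalIntegrable; rw [huab]; exact hPc
  have hQint : IntervalIntegrable Q volume (a : ℝ) (b : ℝ) := by
    apply ContinuousOn.intervalIntegrable; rw [huab]; exact hQc
  have hRfint : IntervalIntegrable (fun x => R x * frC x) volume (a : ℝ) (b : ℝ) :=
    fractII (by rw [huab]; exact hRc)
  have hSfint : IntervalIntegrable (fun x => S x * frC x) volume (a : ℝ) (b : ℝ) :=
    fractII (by rw [huab]; exact hSc)
  rw [intervalIntegral.integral_add hPint hQint]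
  have e3 : (∫ x in (a : ℝ)..(b : ℝ), (R x + S x) * frC x)
      = (∫ x in (a : ℝ)..(b : ℝ), R x * frC x) + ∫ x in (a : ℝ)..(b : ℝ), S x * frC x := by
    rw [← intervalIntegral.integral_add hRfint hSfint]
    apply intervalIntegral.integral_congr
    intro x _
    ring
  rw [e3]
  -- identify the right-hand side terms
  have hT2 : (∫ x in (a : ℝ)..(b : ℝ), ∫ y in (c : ℝ)..(d : ℝ), fx x y * frC x)
      = ∫ x in (a : ℝ)..(b : ℝ), R x * frC x := by
    apply intervalIntegral.integral_congr
    intro x _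
    exact intervalIntegral.integral_mul_const (frC x) (fun y => fx x y)
  have hT4 : (∫ x in (a : ℝ)..(b : ℝ), ∫ y in (c : ℝ)..(d : ℝ), fxy x y * frC x * frC y)
      = ∫ x in (a : ℝ)..(b : ℝ), S x * frC x := by
    apply intervalIntegral.integral_congr
    intro x _
    calc (∫ y in (c : ℝ)..(d : ℝ), fxy x y * frC x * frC y)
        = ∫ y in (c : ℝ)..(d : ℝ), (fxy x y * frC y) * frC x := by
          apply intervalIntegral.integral_congr
          intro y _
          ring
      _ = (∫ y in (c : ℝ)..(d : ℝ), fxy x y * frC y) * frC x :=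
          intervalIntegral.integral_mul_const (frC x) (fun y => fxy x y * frC y)
      _ = S x * frC x := rfl
  rw [hT2, hT4]
  ring
end

section
/- Euler summation over an arithmetic progression: Let k ≥ 1 and r be integers with 0 ≤ r < k, let a < b be real numbers, and let f : ℝ → ℂ be differentiable on [a,b] with derivative f′ integrable on [a,b]. Then Σ_{a < n ≤ b, n ≡ r (mod k)} f(n) = (1/k)∫_a^b f(u) du + ∫_a^b ψ((u − r)/k)·f′(u) du + f(a)·ψ((a − r)/k) − f(b)·ψ((b − r)/k), where the sum is over integers n with a < n ≤ b and n ≡ r (mod k). -/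
open MeasureTheory intervalIntegral

/-- The sawtooth function `ψ(x) = x - ⌊x⌋ - 1/2`. -/
noncomputable def saw (x : ℝ) : ℝ := x - ⌊x⌋ - 1/2

private lemma saw_meas : Measurable fun x : ℝ => (saw x : ℂ) := by
  have h : Measurable saw := by
    have : saw = fun x => Int.fract x - 1/2 := by
      funext x; simp only [saw, Int.fract]
    rw [this]
    exact (measurable_fract).sub measurable_const
  exact Complex.measurable_ofReal.comp h

private lemma saw_bound (x : ℝ) : ‖(saw x : ℂ)‖ ≤ 1 := by
  rw [Complex.norm_real, Real.norm_eq_abs, abs_le]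
  unfold saw
  constructor <;> linarith [Int.lt_floor_add_one x, Int.floor_le x]

private lemma saw_mul_intInt {g : ℝ → ℂ} {a b : ℝ} (φ : ℝ → ℝ) (hφ : Measurable φ)
    (hg : IntervalIntegrable g volume a b) :
    IntervalIntegrable (fun t => (saw (φ t) : ℂ) * g t) volume a b := by
  refine ⟨hg.1.bdd_mul (c := 1) ?_ ?_, hg.2.bdd_mul (c := 1) ?_ ?_⟩ <;>
    first
      | exact (saw_meas.comp hφ).aestronglyMeasurable
      | exact Filter.Eventually.of_forall fun x => saw_bound _

private lemma piece (c d : ℝ) (hcd : c < d) (hm : ∀ t ∈ Set.Ico c d, ⌊t⌋ = ⌊c⌋)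
    (g g' : ℝ → ℂ)
    (hg : ∀ x ∈ Set.Icc c d, HasDerivWithinAt g (g' x) (Set.Icc c d) x)
    (hg' : IntervalIntegrable g' volume c d) :
    (∫ u in c..d, g u) + (∫ u in c..d, (saw u : ℂ) * g' u) + g c * (saw c : ℂ)
      = g d * ((d : ℂ) - (⌊c⌋ : ℂ) - 1/2) := by
  have hicc : Set.uIcc c d = Set.Icc c d := Set.uIcc_of_le hcd.le
  have hu : ∀ x ∈ Set.uIcc c d,
      HasDerivWithinAt (fun t : ℝ => ((t : ℂ) - (⌊c⌋ : ℂ) - 1/2)) 1 (Set.uIcc c d) x := by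
    intro x _
    have h1 : HasDerivAt (fun t : ℝ => (t : ℂ)) 1 x := by
      simpa using (hasDerivAt_id x).ofReal_comp
    exact (((h1.sub_const ((⌊c⌋ : ℂ))).sub_const (1/2))).hasDerivWithinAt
  have hv : ∀ x ∈ Set.uIcc c d, HasDerivWithinAt g (g' x) (Set.uIcc c d) x := by
    rw [hicc]; exact hg
  have ibp := integral_mul_deriv_eq_deriv_mul_of_hasDerivWithinAt
      (u := fun t : ℝ => ((t : ℂ) - (⌊c⌋ : ℂ) - 1/2)) (u' := fun _ => 1) (v := g) (v' := g')
      hu hv intervalIntegrable_const hg'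
  have hae : (∫ x in c..d, (saw x : ℂ) * g' x)
      = ∫ x in c..d, ((x : ℂ) - (⌊c⌋ : ℂ) - 1/2) * g' x := by
    apply intervalIntegral.integral_congr_ae
    have hd : ∀ᵐ x : ℝ ∂volume, x ≠ d := by
      rw [MeasureTheory.ae_iff]
      simpa using measure_singleton d
    filter_upwards [hd] with x hx hxI
    rw [Set.uIoc_of_le hcd.le] at hxI
    have hxIco : x ∈ Set.Ico c d := ⟨hxI.1.le, lt_of_le_of_ne hxI.2 hx⟩
    have : saw x = x - (⌊c⌋ : ℝ) - 1/2 := by rw [saw, hm x hxIco]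
    rw [this]; push_cast; ring_nf
  have hsawc : (saw c : ℂ) = (c : ℂ) - (⌊c⌋ : ℂ) - 1/2 := by
    rw [saw]; push_cast; ring
  have hone : (∫ x in c..d, (1 : ℂ) * g x) = ∫ x in c..d, g x := by simp
  rw [hae, hsawc, ibp, hone]
  ring

private lemma caseA (c d : ℝ) (hcd : c < d) (hfl : ⌊d⌋ = ⌊c⌋) (g g' : ℝ → ℂ)
    (hg : ∀ x ∈ Set.Icc c d, HasDerivWithinAt g (g' x) (Set.Icc c d) x)
    (hg' : IntervalIntegrable g' volume c d) :
    ∑ n ∈ Finset.Ioc ⌊c⌋ ⌊d⌋, g (n : ℝ)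
      = (∫ u in c..d, g u) + (∫ u in c..d, (saw u : ℂ) * g' u)
        + g c * (saw c : ℂ) - g d * (saw d : ℂ) := by
  have hm : ∀ t ∈ Set.Ico c d, ⌊t⌋ = ⌊c⌋ := fun t ht =>
    le_antisymm (hfl ▸ Int.floor_le_floor ht.2.le) (Int.floor_le_floor ht.1)
  have hp := piece c d hcd hm g g' hg hg'
  have hsd : (saw d : ℂ) = (d : ℂ) - (⌊c⌋ : ℂ) - 1/2 := by
    rw [saw, hfl]; push_cast; ring
  rw [hfl, Finset.Ioc_self, Finset.sum_empty, hsd]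
  linear_combination -hp

private lemma caseB (c d : ℝ) (hd : d = (⌊c⌋ : ℝ) + 1) (g g' : ℝ → ℂ)
    (hg : ∀ x ∈ Set.Icc c d, HasDerivWithinAt g (g' x) (Set.Icc c d) x)
    (hg' : IntervalIntegrable g' volume c d) :
    ∑ n ∈ Finset.Ioc ⌊c⌋ ⌊d⌋, g (n : ℝ)
      = (∫ u in c..d, g u) + (∫ u in c..d, (saw u : ℂ) * g' u)
        + g c * (saw c : ℂ) - g d * (saw d : ℂ) := by
  have hcd : c < d := by rw [hd]; exact Int.lt_floor_add_one c
  have hfd : ⌊d⌋ = ⌊c⌋ + 1 := by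
    rw [hd]; exact_mod_cast Int.floor_intCast (R := ℝ) (⌊c⌋ + 1)
  have hm : ∀ t ∈ Set.Ico c d, ⌊t⌋ = ⌊c⌋ := by
    intro t ht
    refine le_antisymm ?_ (Int.floor_le_floor ht.1)
    have h1 : (⌊t⌋ : ℝ) < (⌊c⌋ : ℝ) + 1 := lt_of_le_of_lt (Int.floor_le t) (hd ▸ ht.2)
    exact_mod_cast Int.lt_add_one_iff.mp (by exact_mod_cast h1)
  have hp := piece c d hcd hm g g' hg hg'
  have hsd : (saw d : ℂ) = -(1/2) := by
    rw [saw, hfd, hd]; push_cast; ring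
  have hX : (d : ℂ) - (⌊c⌋ : ℂ) - 1/2 = 1/2 := by
    rw [hd]; push_cast; ring
  have hsum : Finset.Ioc ⌊c⌋ ⌊d⌋ = {⌊c⌋ + 1} := by
    rw [hfd]; ext x; simp only [Finset.mem_Ioc, Finset.mem_singleton]; omega
  have hcast : ((⌊c⌋ + 1 : ℤ) : ℝ) = d := by rw [hd]; push_cast; ring
  rw [hsum, Finset.sum_singleton, hcast, hsd]
  rw [hX] at hp
  linear_combination -hp

private lemma core (N : ℕ) : ∀ (α β : ℝ), α ≤ β → ⌊β⌋ - ⌊α⌋ = N → ∀ (g g' : ℝ → ℂ),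
    (∀ x ∈ Set.Icc α β, HasDerivWithinAt g (g' x) (Set.Icc α β) x) →
    IntervalIntegrable g' volume α β →
    ∑ n ∈ Finset.Ioc ⌊α⌋ ⌊β⌋, g (n : ℝ)
      = (∫ u in α..β, g u) + (∫ u in α..β, (saw u : ℂ) * g' u)
        + g α * (saw α : ℂ) - g β * (saw β : ℂ) := by
  induction N with
  | zero =>
    intro α β hab hfl g g' hg hg'
    rcases eq_or_lt_of_le hab with rfl | h
    · simp
    · exact caseA α β h (by omega) g g' hg hg'
  | succ N ih =>
    intro α β hab hfl g g' hg hg'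
    have hflab : ⌊α⌋ + 1 ≤ ⌊β⌋ := by omega
    set m : ℤ := ⌊α⌋ + 1 with hm_def
    have hmβ : (m : ℝ) ≤ β := le_trans (by exact_mod_cast hflab) (Int.floor_le β)
    have hαm : α < (m : ℝ) := by
      have := Int.lt_floor_add_one α
      push_cast [hm_def]; linarith
    have hsub1 : Set.Icc α (m : ℝ) ⊆ Set.Icc α β := Set.Icc_subset_Icc_right hmβ
    have hsub2 : Set.Icc (m : ℝ) β ⊆ Set.Icc α β := Set.Icc_subset_Icc_left hαm.le
    have hg1 : ∀ x ∈ Set.Icc α (m : ℝ), HasDerivWithinAt g (g' x) (Set.Icc α (m : ℝ)) x :=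
      fun x hx => (hg x (hsub1 hx)).mono hsub1
    have hg2 : ∀ x ∈ Set.Icc (m : ℝ) β, HasDerivWithinAt g (g' x) (Set.Icc (m : ℝ) β) x :=
      fun x hx => (hg x (hsub2 hx)).mono hsub2
    have hu1 : Set.uIcc α (m : ℝ) ⊆ Set.uIcc α β := by
      rw [Set.uIcc_of_le hαm.le, Set.uIcc_of_le hab]; exact hsub1
    have hu2 : Set.uIcc (m : ℝ) β ⊆ Set.uIcc α β := by
      rw [Set.uIcc_of_le hmβ, Set.uIcc_of_le hab]; exact hsub2
    have hg'1 : IntervalIntegrable g' volume α m := hg'.mono_set hu1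
    have hg'2 : IntervalIntegrable g' volume m β := hg'.mono_set hu2
    have hfm : ⌊(m : ℝ)⌋ = m := Int.floor_intCast m
    have hB := caseB α (m : ℝ) (by push_cast [hm_def]; ring) g g' hg1 hg'1
    have hIH := ih (m : ℝ) β hmβ (by rw [hfm]; omega) g g' hg2 hg'2
    -- continuity of g gives integrability
    have hgc : ContinuousOn g (Set.Icc α β) := fun x hx => (hg x hx).continuousWithinAt
    have hgi1 : IntervalIntegrable g volume α m :=
      (hgc.mono (by rw [← Set.uIcc_of_le hab]; exact hu1)).intervalIntegrable
    have hgi2 : IntervalIntegrable g volume m β :=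
      (hgc.mono (by rw [← Set.uIcc_of_le hab]; exact hu2)).intervalIntegrable
    have hsi1 : IntervalIntegrable (fun t => (saw t : ℂ) * g' t) volume α m :=
      saw_mul_intInt id measurable_id hg'1
    have hsi2 : IntervalIntegrable (fun t => (saw t : ℂ) * g' t) volume m β :=
      saw_mul_intInt id measurable_id hg'2
    have hint1 : (∫ u in α..(m : ℝ), g u) + (∫ u in (m : ℝ)..β, g u) = ∫ u in α..β, g u :=
      integral_add_adjacent_intervals hgi1 hgi2
    have hint2 : (∫ u in α..(m : ℝ), (saw u : ℂ) * g' u)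
        + (∫ u in (m : ℝ)..β, (saw u : ℂ) * g' u) = ∫ u in α..β, (saw u : ℂ) * g' u :=
      integral_add_adjacent_intervals hsi1 hsi2
    have hsum : (∑ n ∈ Finset.Ioc ⌊α⌋ m, g (n : ℝ)) + ∑ n ∈ Finset.Ioc m ⌊β⌋, g (n : ℝ)
        = ∑ n ∈ Finset.Ioc ⌊α⌋ ⌊β⌋, g (n : ℝ) := by
      have hdisj : Disjoint (Finset.Ioc ⌊α⌋ m) (Finset.Ioc m ⌊β⌋) := by
        rw [Finset.disjoint_left]
        intro x hx hx'
        simp only [Finset.mem_Ioc] at hx hx'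
        omega
      rw [← Finset.sum_union hdisj, Finset.Ioc_union_Ioc_eq_Ioc (by omega : ⌊α⌋ ≤ m) hflab]
    rw [hfm] at hB hIH
    rw [← hsum, hB, hIH]
    linear_combination hint1 + hint2

/-- Euler summation over an arithmetic progression. -/
theorem euler_summation_arith_progression
    (k r : ℤ) (hk : 1 ≤ k) (hr0 : 0 ≤ r) (hrk : r < k)
    (a b : ℝ) (hab : a < b) (f f' : ℝ → ℂ)
    (hf : ∀ x ∈ Set.Icc a b, HasDerivWithinAt f (f' x) (Set.Icc a b) x)
    (hf' : IntervalIntegrable f' MeasureTheory.volume a b) :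
    ∑ n ∈ (Finset.Ioc ⌊a⌋ ⌊b⌋).filter (fun n => n % k = r), f (n : ℝ)
      = (1 / (k : ℂ)) * (∫ u in a..b, f u)
        + (∫ u in a..b, (saw ((u - (r : ℝ)) / (k : ℝ)) : ℂ) * f' u)
        + f a * (saw ((a - (r : ℝ)) / (k : ℝ)) : ℂ)
        - f b * (saw ((b - (r : ℝ)) / (k : ℝ)) : ℂ) := by
  have hk0 : (0 : ℝ) < (k : ℝ) := by exact_mod_cast lt_of_lt_of_le zero_lt_one hk
  have hkne : ((k : ℝ)) ≠ 0 := ne_of_gt hk0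
  set K : ℝ := (k : ℝ) with hK
  set R : ℝ := (r : ℝ) with hR
  set α : ℝ := (a - R) / K with hα
  set β : ℝ := (b - R) / K with hβ
  have hKα : K * α + R = a := by rw [hα, mul_div_cancel₀ _ hkne, sub_add_cancel]
  have hKβ : K * β + R = b := by rw [hβ, mul_div_cancel₀ _ hkne, sub_add_cancel]
  have hαβ : α < β := by
    rw [hα, hβ]; exact div_lt_div_of_pos_right (by linarith) hk0
  set g : ℝ → ℂ := fun t => f (K * t + R) with hgdef
  set g' : ℝ → ℂ := fun t => K • f' (K * t + R) with hg'def
  have hmap : Set.MapsTo (fun t => K * t + R) (Set.Icc α β) (Set.Icc a b) := by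
    intro t ht
    have h1 : K * α ≤ K * t := mul_le_mul_of_nonneg_left ht.1 hk0.le
    have h2 : K * t ≤ K * β := mul_le_mul_of_nonneg_left ht.2 hk0.le
    simp only [Set.mem_Icc]
    constructor <;> linarith
  have hg : ∀ x ∈ Set.Icc α β, HasDerivWithinAt g (g' x) (Set.Icc α β) x := by
    intro x hx
    have hι : HasDerivAt (fun t : ℝ => K * t + R) K x := by
      simpa using ((hasDerivAt_id x).const_mul K).add_const R
    exact (hf _ (hmap hx)).scomp x hι.hasDerivWithinAt hmap
  have hg' : IntervalIntegrable g' volume α β := by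
    have h1 : IntervalIntegrable (fun x => f' (x + R)) volume (a - R) (b - R) :=
      hf'.comp_add_right R
    have h2 : IntervalIntegrable (fun x => f' (K * x + R)) volume ((a - R) / K) ((b - R) / K) :=
      h1.comp_mul_left (c := K)
    exact (h2.smul K)
  have hcore := core (⌊β⌋ - ⌊α⌋).toNat α β hαβ.le
    (Int.toNat_of_nonneg (sub_nonneg.mpr (Int.floor_le_floor hαβ.le))).symm g g' hg hg'
  -- sum conversion
  have hlt : ∀ m : ℤ, (⌊α⌋ < m ↔ ⌊a⌋ < k * m + r) := by
    intro m
    rw [Int.floor_lt, Int.floor_lt]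
    constructor
    · intro h
      have h2 := (div_lt_iff₀ hk0).1 (hα ▸ h)
      push_cast
      linarith
    · intro h
      rw [hα, div_lt_iff₀ hk0]
      push_cast at h
      linarith
  have hle : ∀ m : ℤ, (m ≤ ⌊β⌋ ↔ k * m + r ≤ ⌊b⌋) := by
    intro m
    rw [Int.le_floor, Int.le_floor]
    constructor
    · intro h
      have h2 := (le_div_iff₀ hk0).1 (hβ ▸ h)
      push_cast
      linarith
    · intro h
      rw [hβ, le_div_iff₀ hk0]
      push_cast at h
      linarith
  have hset : (Finset.Ioc ⌊a⌋ ⌊b⌋).filter (fun n => n % k = r)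
      = (Finset.Ioc ⌊α⌋ ⌊β⌋).image (fun m => k * m + r) := by
    ext n
    simp only [Finset.mem_filter, Finset.mem_image, Finset.mem_Ioc]
    constructor
    · rintro ⟨⟨h1, h2⟩, h3⟩
      obtain ⟨m, hm⟩ := Int.dvd_self_sub_of_emod_eq h3
      have hn : k * m + r = n := by rw [← hm]; ring
      exact ⟨m, ⟨(hlt m).2 (by rw [hn]; exact h1), (hle m).2 (by rw [hn]; exact h2)⟩, hn⟩
    · rintro ⟨m, ⟨h1, h2⟩, rfl⟩
      refine ⟨⟨(hlt m).1 h1, (hle m).1 h2⟩, ?_⟩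
      rw [add_comm, Int.add_mul_emod_self_left, Int.emod_eq_of_lt hr0 hrk]
  have hsum : ∑ n ∈ (Finset.Ioc ⌊a⌋ ⌊b⌋).filter (fun n => n % k = r), f (n : ℝ)
      = ∑ m ∈ Finset.Ioc ⌊α⌋ ⌊β⌋, g (m : ℝ) := by
    rw [hset, Finset.sum_image]
    · apply Finset.sum_congr rfl
      intro m _
      simp only [hgdef]
      congr 1
      push_cast
      ring
    · intro x _ y _ h
      have h2 : k * x = k * y := by have h' : k * x + r = k * y + r := h; omega
      exact mul_left_cancel₀ (by omega : k ≠ 0) h2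
  -- integral conversions
  have hC1 : (1 / (k : ℂ)) * (∫ u in a..b, f u) = ∫ u in α..β, g u := by
    have h3 := intervalIntegral.integral_comp_mul_add (a := α) (b := β) f hkne R
    rw [hKα, hKβ] at h3
    rw [hgdef, h3, Complex.real_smul, hK]
    push_cast
    ring
  have hC2 : (∫ u in a..b, (saw ((u - R) / K) : ℂ) * f' u)
      = ∫ u in α..β, (saw u : ℂ) * g' u := by
    have h3 := intervalIntegral.integral_comp_mul_add (a := α) (b := β)
        (fun u => (saw ((u - R) / K) : ℂ) * f' u) hkne R
    rw [hKα, hKβ] at h3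
    have h5 : (∫ t in α..β, (saw t : ℂ) * g' t)
        = K • ∫ t in α..β, (saw t : ℂ) * f' (K * t + R) := by
      rw [← intervalIntegral.integral_smul]
      apply intervalIntegral.integral_congr
      intro t _
      simp only [hg'def, Complex.real_smul]
      ring
    have h6 : (∫ t in α..β, (saw t : ℂ) * f' (K * t + R))
        = ∫ t in α..β, (saw ((K * t + R - R) / K) : ℂ) * f' (K * t + R) := by
      apply intervalIntegral.integral_congr
      intro t _
      simp only [add_sub_cancel_right, mul_div_cancel_left₀ _ hkne]
    symm
    rw [h5, h6, h3, smul_inv_smul₀ hkne]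
  have hga : g α = f a := by simp only [hgdef]; rw [hKα]
  have hgb : g β = f b := by simp only [hgdef]; rw [hKβ]
  rw [hsum, hcore, hga, hgb, ← hC1, ← hC2]
end

section
/- Sawtooth form of the weighted Euler formula: Let k ≥ 1 be an integer, let χ : ℤ → ℂ satisfy χ(n + k) = χ(n) for all n, let a < b be real numbers, and let f : ℝ → ℂ be differentiable on [a,b] with derivative f′ integrable on [a,b]. Then Σ_{a < n ≤ b} χ(n) f(n) = Σ_{l=1}^{k} χ(l) · { (1/k)∫_a^b f(u) du + ∫_a^b ψ((u − l)/k)·f′(u) du + f(a)·ψ((a − l)/k) − f(b)·ψ((b − l)/k) }, where the outer sum is over integers n with a < n ≤ b. -/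
open MeasureTheory intervalIntegral

lemma saw_eq_fract (x : ℝ) : saw x = Int.fract x - 1/2 := by rw [saw, Int.fract]

lemma saw_abs_le (x : ℝ) : |saw x| ≤ 1 := by
  rw [saw_eq_fract]
  have h1 := Int.fract_nonneg x
  have h2 := Int.fract_lt_one x
  rw [abs_le]; constructor <;> linarith

lemma saw_measurable : Measurable saw := by
  have h : Measurable fun x : ℝ => ((⌊x⌋ : ℤ) : ℝ) :=
    measurable_from_top.comp Int.measurable_floor
  exact (measurable_id.sub h).sub measurable_const

lemma per_class (k : ℕ) (hk : 1 ≤ k) (l : ℤ) (a b : ℝ) (hab : a < b)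
    (f f' : ℝ → ℂ)
    (hf : ∀ x ∈ Set.Icc a b, HasDerivWithinAt f (f' x) (Set.Icc a b) x)
    (hf' : IntervalIntegrable f' MeasureTheory.volume a b) :
    ∑ m ∈ Finset.Ioc ⌊(a - (l:ℝ)) / (k:ℝ)⌋ ⌊(b - (l:ℝ)) / (k:ℝ)⌋, f ((l:ℝ) + k * m)
      = (1 / (k : ℂ)) * (∫ u in a..b, f u)
        + (∫ u in a..b, (saw ((u - (l : ℝ)) / (k : ℝ)) : ℂ) * f' u)
        + f a * (saw ((a - (l : ℝ)) / (k : ℝ)) : ℂ)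
        - f b * (saw ((b - (l : ℝ)) / (k : ℝ)) : ℂ) := by
  have hK : (0:ℝ) < k := by exact_mod_cast hk
  have hKC : (k:ℂ) ≠ 0 := by exact_mod_cast hK.ne'
  set Ma : ℤ := ⌊(a - (l:ℝ)) / (k:ℝ)⌋ with hMa
  set Mb : ℤ := ⌊(b - (l:ℝ)) / (k:ℝ)⌋ with hMb
  set S : Finset ℤ := Finset.Ioc Ma Mb with hS
  have hMab : Ma ≤ Mb := Int.floor_le_floor ((div_le_div_iff_of_pos_right hK).mpr (by linarith))
  have hmem : ∀ m ∈ S, a < (l:ℝ) + k*m ∧ (l:ℝ) + k*m ≤ b := by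
    intro m hm
    rw [hS, Finset.mem_Ioc] at hm
    constructor
    · have h1 : (a - (l:ℝ))/(k:ℝ) < m := Int.floor_lt.mp hm.1
      have := (div_lt_iff₀ hK).mp h1
      nlinarith
    · have h2 : (m:ℝ) ≤ (b - (l:ℝ))/(k:ℝ) := Int.le_floor.mp hm.2
      have := (le_div_iff₀ hK).mp h2
      nlinarith
  -- continuity and integrability of f
  have hcont : ContinuousOn f (Set.Icc a b) := fun x hx => (hf x hx).continuousWithinAt
  have hfint : IntervalIntegrable f volume a b := by
    apply ContinuousOn.intervalIntegrable
    rwa [Set.uIcc_of_le hab.le]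
  -- FTC
  have FTC : ∀ x ∈ Set.Icc a b, ∫ u in x..b, f' u = f b - f x := by
    intro x hx
    apply integral_eq_sub_of_hasDeriv_right_of_le hx.2
      (hcont.mono (Set.Icc_subset_Icc hx.1 le_rfl))
    · intro y hy
      exact ((hf y ⟨(hx.1.trans hy.1.le), hy.2.le⟩).hasDerivAt
        (Icc_mem_nhds (lt_of_le_of_lt hx.1 hy.1) hy.2)).hasDerivWithinAt
    · exact hf'.mono_set (by
        rw [Set.uIcc_of_le hx.2, Set.uIcc_of_le hab.le]
        exact Set.Icc_subset_Icc hx.1 le_rfl)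
  have hfab : ∫ u in a..b, f' u = f b - f a := FTC a ⟨le_rfl, hab.le⟩
  -- integrability of saw * f'
  have hsawint : IntervalIntegrable (fun u => (saw ((u - (l:ℝ)) / (k:ℝ)) : ℂ) * f' u) volume a b := by
    rw [intervalIntegrable_iff] at hf' ⊢
    apply hf'.bdd_mul
    · apply Measurable.aestronglyMeasurable
      exact Complex.measurable_ofReal.comp
        (saw_measurable.comp (((measurable_id.sub measurable_const)).div_const _))
    · refine Filter.Eventually.of_forall (fun x => ?_)
      rw [Complex.norm_real]
      exact saw_abs_le _
  -- integrability of ((u-l)/k - 1/2) * f'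
  have hlinc : Continuous fun u : ℝ => (((u:ℂ) - (l:ℝ)) / (k:ℝ) - 1/2) := by continuity
  have hlin : IntervalIntegrable (fun u => (((u:ℂ) - (l:ℝ)) / (k:ℝ) - 1/2) * f' u) volume a b :=
    hf'.continuousOn_mul hlinc.continuousOn
  -- floor as linear minus saw
  have hfloor_eq : ∀ u : ℝ, ((⌊(u - (l:ℝ)) / (k:ℝ)⌋ : ℤ) : ℂ)
      = (((u:ℂ) - (l:ℝ)) / (k:ℝ) - 1/2) - (saw ((u - (l:ℝ)) / (k:ℝ)) : ℂ) := by
    intro u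
    rw [saw]
    push_cast
    ring
  -- product FTC
  have hprod : (∫ u in a..b, ((1/(k:ℂ)) * f u + (((u:ℂ) - (l:ℝ)) / (k:ℝ) - 1/2) * f' u))
      = (((b:ℂ) - (l:ℝ)) / (k:ℝ) - 1/2) * f b - (((a:ℂ) - (l:ℝ)) / (k:ℝ) - 1/2) * f a := by
    apply integral_eq_sub_of_hasDeriv_right_of_le hab.le
      (hlinc.continuousOn.mul hcont)
    · intro y hy
      have hc : HasDerivAt (fun u : ℝ => (((u:ℂ) - (l:ℝ)) / (k:ℝ) - 1/2)) (1/(k:ℂ)) y := by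
        have h1 : HasDerivAt (fun u : ℝ => (u:ℂ)) 1 y := Complex.ofRealCLM.hasDerivAt
        simpa using ((h1.sub_const ((l:ℝ):ℂ)).div_const ((k:ℝ):ℂ)).sub_const (1/2 : ℂ)
      have hd : HasDerivAt f (f' y) y :=
        (hf y ⟨hy.1.le, hy.2.le⟩).hasDerivAt (Icc_mem_nhds hy.1 hy.2)
      exact (hc.mul hd).hasDerivWithinAt
    · exact (hfint.const_mul _).add hlin
  have hcf' : (∫ u in a..b, (((u:ℂ) - (l:ℝ)) / (k:ℝ) - 1/2) * f' u)
      = (((b:ℂ) - (l:ℝ)) / (k:ℝ) - 1/2) * f b - (((a:ℂ) - (l:ℝ)) / (k:ℝ) - 1/2) * f a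
        - (1/(k:ℂ)) * ∫ u in a..b, f u := by
    rw [integral_add (hfint.const_mul _) hlin, intervalIntegral.integral_const_mul] at hprod
    linear_combination hprod
  -- floor * f' integrability and value
  have hfl_fun : (fun u : ℝ => ((⌊(u - (l:ℝ)) / (k:ℝ)⌋ : ℤ) : ℂ) * f' u)
      = fun u : ℝ => (((u:ℂ) - (l:ℝ)) / (k:ℝ) - 1/2) * f' u
        - (saw ((u - (l:ℝ)) / (k:ℝ)) : ℂ) * f' u := by
    funext u; rw [hfloor_eq u]; ring
  have hfloorint : IntervalIntegrable (fun u => ((⌊(u - (l:ℝ)) / (k:ℝ)⌋ : ℤ) : ℂ) * f' u) volume a b := by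
    rw [hfl_fun]; exact hlin.sub hsawint
  have hfloorval : (∫ u in a..b, ((⌊(u - (l:ℝ)) / (k:ℝ)⌋ : ℤ) : ℂ) * f' u)
      = (((b:ℂ) - (l:ℝ)) / (k:ℝ) - 1/2) * f b - (((a:ℂ) - (l:ℝ)) / (k:ℝ) - 1/2) * f a
        - (1/(k:ℂ)) * (∫ u in a..b, f u)
        - ∫ u in a..b, (saw ((u - (l:ℝ)) / (k:ℝ)) : ℂ) * f' u := by
    rw [hfl_fun, integral_sub hlin hsawint, hcf']
  -- indicator integrability
  have hind : ∀ m ∈ S, IntervalIntegrable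
      (fun u => Set.indicator {x : ℝ | x ≤ (l:ℝ) + k*m} f' u) volume a b := by
    intro m hm
    rw [intervalIntegrable_iff] at hf' ⊢
    exact hf'.indicator measurableSet_Iic
  have hsplit : ∀ m ∈ S, f ((l:ℝ) + k*m)
      = f b - (∫ u in a..b, f' u)
        + ∫ u in a..b, Set.indicator {x : ℝ | x ≤ (l:ℝ) + k*m} f' u := by
    intro m hm
    have h1 := FTC ((l:ℝ)+k*m) ⟨(hmem m hm).1.le, (hmem m hm).2⟩
    have h2 : (∫ u in a..(((l:ℝ)+k*m)), f' u) + ∫ u in (((l:ℝ)+k*m))..b, f' u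
        = ∫ u in a..b, f' u :=
      integral_add_adjacent_intervals
        (hf'.mono_set (by
          rw [Set.uIcc_of_le (hmem m hm).1.le, Set.uIcc_of_le hab.le]
          exact Set.Icc_subset_Icc le_rfl (hmem m hm).2))
        (hf'.mono_set (by
          rw [Set.uIcc_of_le (hmem m hm).2, Set.uIcc_of_le hab.le]
          exact Set.Icc_subset_Icc (hmem m hm).1.le le_rfl))
    have h3 : (∫ u in a..b, Set.indicator {x : ℝ | x ≤ (l:ℝ)+k*m} f' u)
        = ∫ u in a..((l:ℝ)+k*m), f' u :=
      integral_indicator ⟨(hmem m hm).1.le, (hmem m hm).2⟩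
    rw [h3]
    linear_combination h1 - h2
  -- a.e. counting identity
  have hcount : ∀ᵐ u : ℝ ∂volume, u ∈ Set.uIoc a b →
      (∑ m ∈ S, Set.indicator {x : ℝ | x ≤ (l:ℝ) + k*m} f' u)
        = (((Mb:ℤ):ℂ) - ((⌊(u - (l:ℝ)) / (k:ℝ)⌋ : ℤ):ℂ)) * f' u := by
    have hE : volume (Set.range (fun m : ℤ => (l:ℝ) + k*m)) = 0 :=
      (Set.countable_range _).measure_zero _
    filter_upwards [measure_eq_zero_iff_ae_notMem.mp hE] with u hu hmemu
    rw [Set.uIoc_of_le hab.le] at hmemu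
    set w : ℤ := ⌊(u - (l:ℝ)) / (k:ℝ)⌋ with hw
    have hne : ∀ m : ℤ, u ≠ (l:ℝ) + k*m := fun m h => hu ⟨m, h.symm⟩
    have hwa : Ma ≤ w := Int.floor_le_floor ((div_le_div_iff_of_pos_right hK).mpr (by linarith [hmemu.1]))
    have hwb : w ≤ Mb := Int.floor_le_floor ((div_le_div_iff_of_pos_right hK).mpr (by linarith [hmemu.2]))
    have hiff : ∀ m : ℤ, (u ≤ (l:ℝ) + k*m ↔ w < m) := by
      intro m
      constructor
      · intro h
        have h1 : (u - (l:ℝ))/(k:ℝ) ≤ (m:ℝ) := (div_le_iff₀ hK).mpr (by nlinarith)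
        have h2 : w ≤ m := by
          have := Int.floor_le_floor h1
          simpa [hw] using this
        rcases eq_or_lt_of_le h2 with he | hlt
        · exfalso
          have h3 : ((w:ℤ):ℝ) ≤ (u - (l:ℝ))/(k:ℝ) := Int.floor_le _
          have h4 : (u - (l:ℝ))/(k:ℝ) = (m:ℝ) := le_antisymm h1 (by
            rw [← he]; exact h3)
          apply hne m
          have h5 : u - (l:ℝ) = m * k := by
            field_simp at h4; linarith
          linarith
        · exact hlt
      · intro h
        have h1 : (u - (l:ℝ))/(k:ℝ) < (w:ℝ) + 1 := Int.lt_floor_add_one _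
        have h2 : (u - (l:ℝ))/(k:ℝ) ≤ (m:ℝ) := by
          have : ((w:ℝ) + 1) ≤ (m:ℝ) := by exact_mod_cast h
          linarith
        have := (div_le_iff₀ hK).mp h2
        nlinarith
    have hfilter : S.filter (fun m : ℤ => u ≤ (l:ℝ) + k*(m:ℝ)) = Finset.Ioc w Mb := by
      ext m
      simp only [Finset.mem_filter, hS, Finset.mem_Ioc, hiff m]
      constructor
      · rintro ⟨⟨_, h2⟩, h3⟩; exact ⟨h3, h2⟩
      · rintro ⟨h1, h2⟩; exact ⟨⟨lt_of_le_of_lt hwa h1, h2⟩, h1⟩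
    simp only [Set.indicator_apply, Set.mem_setOf_eq]
    rw [Finset.sum_ite, Finset.sum_const, Finset.sum_const_zero, add_zero, hfilter,
      Int.card_Ioc, nsmul_eq_mul]
    congr 1
    have h := Int.toNat_of_nonneg (sub_nonneg.mpr hwb)
    exact_mod_cast congrArg (fun z : ℤ => (z : ℂ)) h
  have hsum_ind : (∑ m ∈ S, (∫ u in a..b, Set.indicator {x : ℝ | x ≤ (l:ℝ) + k*m} f' u))
      = ∫ u in a..b, (((Mb:ℤ):ℂ) - ((⌊(u - (l:ℝ)) / (k:ℝ)⌋ : ℤ):ℂ)) * f' u := by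
    rw [← intervalIntegral.integral_finset_sum hind]
    exact integral_congr_ae hcount
  have hRval : (∫ u in a..b, (((Mb:ℤ):ℂ) - ((⌊(u - (l:ℝ)) / (k:ℝ)⌋ : ℤ):ℂ)) * f' u)
      = ((Mb:ℤ):ℂ) * (f b - f a)
        - ((((b:ℂ) - (l:ℝ)) / (k:ℝ) - 1/2) * f b - (((a:ℂ) - (l:ℝ)) / (k:ℝ) - 1/2) * f a
          - (1/(k:ℂ)) * (∫ u in a..b, f u)
          - ∫ u in a..b, (saw ((u - (l:ℝ)) / (k:ℝ)) : ℂ) * f' u) := by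
    have hfn : (fun u : ℝ => (((Mb:ℤ):ℂ) - ((⌊(u - (l:ℝ)) / (k:ℝ)⌋ : ℤ):ℂ)) * f' u)
        = fun u : ℝ => ((Mb:ℤ):ℂ) * f' u - ((⌊(u - (l:ℝ)) / (k:ℝ)⌋ : ℤ):ℂ) * f' u := by
      funext u; ring
    rw [hfn, integral_sub (hf'.const_mul _) hfloorint, intervalIntegral.integral_const_mul, hfab, hfloorval]
  have hcard : ((S.card : ℕ) : ℂ) = ((Mb:ℤ):ℂ) - ((Ma:ℤ):ℂ) := by
    rw [hS, Int.card_Ioc]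
    have h := Int.toNat_of_nonneg (sub_nonneg.mpr hMab)
    exact_mod_cast congrArg (fun z : ℤ => (z : ℂ)) h
  have hsawa : ((saw ((a - (l:ℝ)) / (k:ℝ)) : ℝ) : ℂ)
      = ((a:ℂ) - (l:ℝ)) / (k:ℝ) - 1/2 - ((Ma:ℤ):ℂ) := by
    have := hfloor_eq a
    rw [← hMa] at this
    linear_combination this
  have hsawb : ((saw ((b - (l:ℝ)) / (k:ℝ)) : ℝ) : ℂ)
      = ((b:ℂ) - (l:ℝ)) / (k:ℝ) - 1/2 - ((Mb:ℤ):ℂ) := by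
    have := hfloor_eq b
    rw [← hMb] at this
    linear_combination this
  rw [show (∑ m ∈ S, f ((l:ℝ) + k * m)) = _ from Finset.sum_congr rfl hsplit,
    Finset.sum_add_distrib, Finset.sum_const, hsum_ind, hRval, hfab, nsmul_eq_mul, hcard,
    hsawa, hsawb]
  ring

/-- Sawtooth form of the weighted Euler formula. -/
theorem weighted_euler_sawtooth
    (k : ℕ) (hk : 1 ≤ k) (χ : ℤ → ℂ) (hχ : ∀ n : ℤ, χ (n + (k : ℤ)) = χ n)
    (a b : ℝ) (hab : a < b) (f f' : ℝ → ℂ)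
    (hf : ∀ x ∈ Set.Icc a b, HasDerivWithinAt f (f' x) (Set.Icc a b) x)
    (hf' : IntervalIntegrable f' MeasureTheory.volume a b) :
    ∑ n ∈ Finset.Ioc ⌊a⌋ ⌊b⌋, χ n * f (n : ℝ)
      = ∑ l ∈ Finset.Icc (1 : ℤ) (k : ℤ), χ l *
          ((1 / (k : ℂ)) * (∫ u in a..b, f u)
            + (∫ u in a..b, (saw ((u - (l : ℝ)) / (k : ℝ)) : ℂ) * f' u)
            + f a * (saw ((a - (l : ℝ)) / (k : ℝ)) : ℂ)
            - f b * (saw ((b - (l : ℝ)) / (k : ℝ)) : ℂ)) := by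
  classical
  have hk' : (0:ℤ) < k := by exact_mod_cast hk
  have hKR : (0:ℝ) < k := by exact_mod_cast hk
  have hper : ∀ (n m : ℤ), χ (n + k*m) = χ n := by
    intro n m
    induction m using Int.induction_on with
    | zero => simp
    | succ i ih =>
      have h := hχ (n + k*i)
      rw [show n + (k:ℤ)*((i:ℤ)+1) = n + k*i + k by ring, h]
      exact ih
    | pred i ih =>
      have h := hχ (n + k*(-(i:ℤ)-1))
      rw [show n + (k:ℤ)*(-(i:ℤ)-1) + k = n + k*(-(i:ℤ)) by ring] at h
      rw [← h]
      exact ih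
  have step : ∀ l ∈ Finset.Icc (1:ℤ) (k:ℤ),
      χ l * ((1 / (k : ℂ)) * (∫ u in a..b, f u)
            + (∫ u in a..b, (saw ((u - (l : ℝ)) / (k : ℝ)) : ℂ) * f' u)
            + f a * (saw ((a - (l : ℝ)) / (k : ℝ)) : ℂ)
            - f b * (saw ((b - (l : ℝ)) / (k : ℝ)) : ℂ))
      = χ l * ∑ m ∈ Finset.Ioc ⌊(a - (l:ℝ)) / (k:ℝ)⌋ ⌊(b - (l:ℝ)) / (k:ℝ)⌋, f ((l:ℝ) + k * m) := by
    intro l _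
    rw [per_class k hk l a b hab f f' hf hf']
  rw [Finset.sum_congr rfl step]
  simp_rw [Finset.mul_sum]
  rw [Finset.sum_sigma']
  have hmm : ∀ (l m : ℤ),
      (m ∈ Finset.Ioc ⌊(a - (l:ℝ)) / (k:ℝ)⌋ ⌊(b - (l:ℝ)) / (k:ℝ)⌋
        ↔ l + k*m ∈ Finset.Ioc ⌊a⌋ ⌊b⌋) := by
    intro l m
    simp only [Finset.mem_Ioc, Int.floor_lt, Int.le_floor]
    push_cast
    constructor
    · rintro ⟨h1, h2⟩
      have h3 := (div_lt_iff₀ hKR).mp h1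
      have h4 := (le_div_iff₀ hKR).mp h2
      constructor <;> nlinarith
    · rintro ⟨h1, h2⟩
      constructor
      · rw [div_lt_iff₀ hKR]; nlinarith
      · rw [le_div_iff₀ hKR]; nlinarith
  have he : ∀ n : ℤ, (n-1) % k + 1 + k * ((n-1)/k) = n := by
    intro n
    have h := Int.emod_add_mul_ediv (n-1) k
    linarith
  refine Finset.sum_nbij' (i := fun n : ℤ => (⟨(n-1) % k + 1, (n-1) / k⟩ : Σ _ : ℤ, ℤ))
    (j := fun p : Σ _ : ℤ, ℤ => p.1 + k * p.2) ?_ ?_ ?_ ?_ ?_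
  · intro n hn
    rw [Finset.mem_sigma]
    constructor
    · show ((n-1) % (k:ℤ) + 1) ∈ Finset.Icc (1:ℤ) (k:ℤ)
      rw [Finset.mem_Icc]
      have h1 := Int.emod_nonneg (n-1) (ne_of_gt hk')
      have h2 := Int.emod_lt_of_pos (n-1) hk'
      omega
    · rw [hmm]
      rwa [he n]
  · rintro ⟨l, m⟩ hp
    dsimp only
    rw [Finset.mem_sigma] at hp
    exact (hmm l m).mp hp.2
  · intro n _
    show (_ : ℤ) + _ = n
    exact he n
  · rintro ⟨l, m⟩ hp
    dsimp only at hp ⊢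
    rw [Finset.mem_sigma, Finset.mem_Icc] at hp
    dsimp only at hp
    have h1 : (l + k*m - 1) % k = l - 1 := by
      rw [show l + (k:ℤ)*m - 1 = l - 1 + k*m by ring, Int.add_mul_emod_self_left,
        Int.emod_eq_of_lt (by omega) (by omega)]
    have h2 : (l + k*m - 1) / k = m := by
      rw [show l + (k:ℤ)*m - 1 = l - 1 + k*m by ring,
        Int.add_mul_ediv_left _ _ (ne_of_gt hk'),
        Int.ediv_eq_zero_of_lt (by omega) (by omega), zero_add]
    show (⟨(l + k*m - 1) % k + 1, (l + k*m - 1) / k⟩ : Σ _ : ℤ, ℤ) = ⟨l, m⟩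
    rw [h1, h2, show l - 1 + 1 = l by ring]
  · intro n _
    have hχeq : χ ((n-1) % k + 1) = χ n := by
      have h := hper ((n-1) % k + 1) ((n-1)/k)
      rw [he n] at h
      exact h.symm
    have hfeq : ((((n-1) % k + 1 : ℤ) : ℝ) + (k:ℝ) * (((n-1)/k : ℤ) : ℝ)) = (n:ℝ) := by
      exact_mod_cast congrArg (fun z : ℤ => (z:ℝ)) (he n)
    show χ n * f (n:ℝ) = χ ((n-1) % k + 1) * f _
    rw [hχeq, hfeq]
end

section
/- Sawtooth form of the divisor-and-periodic-weighted Euler formula: Let k ≥ 1 be an integer, χ : ℤ → ℂ with χ(n + k) = χ(n) for all n, let a, b be real numbers with 0 ≤ a < b, and let f : ℝ → ℂ be differentiable on [a,b] with derivative f′ integrable on [a,b]. Then Σ_{a < n ≤ b} χ(n) d(n) f(n) = Σ_{1 ≤ m ≤ b} Σ_{r₂=1}^{k} χ(m·r₂) · { (1/(k·m))∫_a^b f(u) du + ∫_a^b ψ((u/m − r₂)/k)·f′(u) du + f(a)·ψ((a/m − r₂)/k) − f(b)·ψ((b/m − r₂)/k) }, where the sum over m is over positive integers m ≤ b and the sum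 over n is over integers n with a < n ≤ b. -/
open MeasureTheory intervalIntegral

-- integrability of saw * g'
lemma saw_mul_integrable {g' : ℝ → ℂ} {α β : ℝ}
    (hg' : IntervalIntegrable g' volume α β) :
    IntervalIntegrable (fun t => (saw t : ℂ) * g' t) volume α β := by
  rw [intervalIntegrable_iff] at hg' ⊢
  refine hg'.bdd_mul (c := 3/2) ?_ (Filter.Eventually.of_forall fun t => ?_)
  · refine (Measurable.aestronglyMeasurable ?_).restrict
    have hms : Measurable fun t : ℝ => saw t :=
      (measurable_fract (R := ℝ)).sub measurable_const
    exact Complex.measurable_ofReal.comp hms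
  · have h1 : (0:ℝ) ≤ Int.fract t := Int.fract_nonneg t
    have h2 : Int.fract t < 1 := Int.fract_lt_one t
    have hs : saw t = Int.fract t - 1/2 := rfl
    rw [Complex.norm_real, hs, Real.norm_eq_abs, abs_le]
    constructor <;> nlinarith

lemma saw_parts {g g' : ℝ → ℂ} {α β : ℝ}
    (hg : ∀ x ∈ Set.Icc α β, HasDerivWithinAt g (g' x) (Set.Icc α β) x)
    (hg' : IntervalIntegrable g' volume α β)
    (n : ℤ) {t₁ t₂ : ℝ} (h12 : t₁ ≤ t₂) (hα : α ≤ t₁) (hβ : t₂ ≤ β)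
    (hn1 : (n : ℝ) ≤ t₁) (hn2 : t₂ ≤ (n : ℝ) + 1) :
    ∫ t in t₁..t₂, (saw t : ℂ) * g' t
      = ((t₂ : ℂ) - n - 1/2) * g t₂ - ((t₁ : ℂ) - n - 1/2) * g t₁ - ∫ t in t₁..t₂, g t := by
  have hsub : Set.Icc t₁ t₂ ⊆ Set.Icc α β := Set.Icc_subset_Icc hα hβ
  have hgc : ContinuousOn g (Set.Icc α β) := fun x hx => (hg x hx).continuousWithinAt
  have hgint : IntervalIntegrable g volume t₁ t₂ :=
    ContinuousOn.intervalIntegrable_of_Icc h12 (hgc.mono hsub)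
  have hg'int : IntervalIntegrable g' volume t₁ t₂ :=
    hg'.mono_set (by rw [Set.uIcc_of_le h12, Set.uIcc_of_le (hα.trans (h12.trans hβ))]; exact hsub)
  -- FTC for G t = ((t:ℂ) - n - 1/2) * g t
  have hG : ∀ x ∈ Set.Icc t₁ t₂,
      HasDerivWithinAt (fun t : ℝ => ((t : ℂ) - n - 1/2) * g t)
        (g x + ((x : ℂ) - n - 1/2) * g' x) (Set.Icc t₁ t₂) x := by
    intro x hx
    have h1 : HasDerivWithinAt (fun t : ℝ => ((t : ℂ) - n - 1/2)) 1 (Set.Icc t₁ t₂) x := by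
      have h0 := (((hasDerivAt_id x).ofReal_comp (z := x)).sub_const
        ((n : ℂ))).sub_const (1/2 : ℂ)
      simpa using h0.hasDerivWithinAt (s := Set.Icc t₁ t₂)
    have h2 : HasDerivWithinAt g (g' x) (Set.Icc t₁ t₂) x :=
      (hg x (hsub hx)).mono hsub
    have := h1.mul h2
    exact this.congr_deriv (by ring)
  have hcont : ContinuousOn (fun t : ℝ => ((t : ℂ) - n - 1/2) * g t) (Set.Icc t₁ t₂) := by
    exact fun x hx => ((hG x hx).continuousWithinAt)
  have hint : IntervalIntegrable (fun x => g x + ((x : ℂ) - n - 1/2) * g' x) volume t₁ t₂ := by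
    refine hgint.add (hg'int.continuousOn_mul ?_)
    refine ContinuousOn.sub (ContinuousOn.sub ?_ continuousOn_const) continuousOn_const
    exact Complex.continuous_ofReal.continuousOn
  have hftc := integral_eq_sub_of_hasDeriv_right_of_le h12 hcont
      (fun x hx => ((hG x (Set.mem_Icc.2 ⟨hx.1.le, hx.2.le⟩)).hasDerivAt
        (Icc_mem_nhds hx.1 hx.2)).hasDerivWithinAt) hint
  rw [integral_add hgint (hg'int.continuousOn_mul (by
      exact ContinuousOn.sub (ContinuousOn.sub Complex.continuous_ofReal.continuousOn
        continuousOn_const) continuousOn_const))] at hftc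
  have hcongr : ∫ t in t₁..t₂, (saw t : ℂ) * g' t
      = ∫ t in t₁..t₂, ((t : ℂ) - n - 1/2) * g' t := by
    refine integral_congr_ae ?_
    have hne : ∀ᵐ t : ℝ ∂volume, t ≠ t₂ := by
      refine (MeasureTheory.ae_iff).2 ?_
      simp [Set.setOf_eq_eq_singleton']
    filter_upwards [hne] with t ht hmem
    rw [Set.uIoc_of_le h12] at hmem
    have h1 : (n : ℝ) ≤ t := hn1.trans hmem.1.le
    have h2 : t < (n : ℝ) + 1 := lt_of_le_of_ne (hmem.2.trans hn2) (by
      intro h; exact ht (le_antisymm hmem.2 (by linarith)))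
    have hfl : ⌊t⌋ = n := Int.floor_eq_iff.2 ⟨h1, h2⟩
    simp only [saw, hfl]
    push_cast
    ring
  rw [hcongr]
  have : ∫ t in t₁..t₂, ((t:ℂ) - n - 1/2) * g' t
      = (((t₂:ℂ) - n - 1/2) * g t₂ - ((t₁:ℂ) - n - 1/2) * g t₁) - ∫ t in t₁..t₂, g t := by
    rw [← hftc]; ring
  rw [this]

lemma euler_saw {g g' : ℝ → ℂ} {β : ℝ} {α : ℝ} (hle : α ≤ β)
    (hg : ∀ x ∈ Set.Icc α β, HasDerivWithinAt g (g' x) (Set.Icc α β) x)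
    (hg' : IntervalIntegrable g' volume α β) :
    ∑ n ∈ Finset.Ioc ⌊α⌋ ⌊β⌋, g n
      = (∫ t in α..β, g t) + (∫ t in α..β, (saw t : ℂ) * g' t)
        + g α * (saw α : ℂ) - g β * (saw β : ℂ) := by
  obtain ⟨N, hN⟩ : ∃ N : ℕ, (⌊β⌋ - ⌊α⌋).toNat = N := ⟨_, rfl⟩
  induction N generalizing α with
  | zero =>
    have hfl : ⌊β⌋ = ⌊α⌋ := le_antisymm (by omega) (Int.floor_le_floor hle)
    rw [hfl, Finset.Ioc_self, Finset.sum_empty,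
      saw_parts hg hg' ⌊α⌋ hle le_rfl le_rfl (Int.floor_le α)
        (by rw [← hfl]; exact (Int.lt_floor_add_one β).le)]
    simp only [saw, hfl]
    push_cast
    ring
  | succ N ih =>
    have h1 : ⌊α⌋ < ⌊β⌋ := by omega
    set c : ℝ := (⌊α⌋ : ℝ) + 1 with hc
    have hαc : α ≤ c := (Int.lt_floor_add_one α).le
    have hcβ : c ≤ β := by
      have h2 : ((⌊α⌋ : ℝ) + 1) ≤ (⌊β⌋ : ℝ) := by exact_mod_cast h1
      exact h2.trans (Int.floor_le β)
    have hflc : ⌊c⌋ = ⌊α⌋ + 1 := by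
      rw [hc]; exact_mod_cast Int.floor_intCast (⌊α⌋ + 1)
    have hsubset : Set.Icc c β ⊆ Set.Icc α β := Set.Icc_subset_Icc_left hαc
    have hg2 : ∀ x ∈ Set.Icc c β, HasDerivWithinAt g (g' x) (Set.Icc c β) x :=
      fun x hx => (hg x (hsubset hx)).mono hsubset
    have hg'2 : IntervalIntegrable g' volume c β :=
      hg'.mono_set (by rw [Set.uIcc_of_le hcβ, Set.uIcc_of_le hle]; exact hsubset)
    have hIH := ih (α := c) hcβ hg2 hg'2 (show (⌊β⌋ - ⌊c⌋).toNat = N by rw [hflc]; omega)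
    -- saw c = -1/2
    have hsawc : saw c = -(1/2) := by simp [saw, hflc, hc]
    -- sum splitting
    have hsum : (∑ n ∈ Finset.Ioc ⌊α⌋ (⌊α⌋ + 1), g n) + ∑ n ∈ Finset.Ioc (⌊α⌋+1) ⌊β⌋, g n
        = ∑ n ∈ Finset.Ioc ⌊α⌋ ⌊β⌋, g n :=
by
      rw [← Finset.Ioc_union_Ioc_eq_Ioc (by omega : ⌊α⌋ ≤ ⌊α⌋ + 1) (by omega : ⌊α⌋ + 1 ≤ ⌊β⌋),
        Finset.sum_union]
      rw [Finset.disjoint_left]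
      intro x hx hx'
      simp only [Finset.mem_Ioc] at hx hx'
      omega
    have hsingle : (∑ n ∈ Finset.Ioc ⌊α⌋ (⌊α⌋ + 1), g n) = g c := by
      have : Finset.Ioc ⌊α⌋ (⌊α⌋ + 1) = {⌊α⌋ + 1} := by
        ext n; simp only [Finset.mem_Ioc, Finset.mem_singleton]; omega
      rw [this, Finset.sum_singleton, hc]
      norm_num
    have hgc : ContinuousOn g (Set.Icc α β) := fun x hx => (hg x hx).continuousWithinAt
    have hgi1 : IntervalIntegrable g volume α c :=
      ContinuousOn.intervalIntegrable_of_Icc hαc (hgc.mono (Set.Icc_subset_Icc_right hcβ))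
    have hgi2 : IntervalIntegrable g volume c β :=
      ContinuousOn.intervalIntegrable_of_Icc hcβ (hgc.mono hsubset)
    have hg'1 : IntervalIntegrable g' volume α c :=
      hg'.mono_set (by rw [Set.uIcc_of_le hαc, Set.uIcc_of_le hle]
                       exact Set.Icc_subset_Icc_right hcβ)
    have hsplit1 : (∫ t in α..c, g t) + (∫ t in c..β, g t) = ∫ t in α..β, g t :=
      integral_add_adjacent_intervals hgi1 hgi2
    have hsplit2 : (∫ t in α..c, (saw t : ℂ) * g' t) + (∫ t in c..β, (saw t : ℂ) * g' t)
        = ∫ t in α..β, (saw t : ℂ) * g' t :=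
      integral_add_adjacent_intervals (saw_mul_integrable hg'1) (saw_mul_integrable hg'2)
    have hparts := saw_parts hg hg' ⌊α⌋ hαc le_rfl hcβ (Int.floor_le α) (le_of_eq hc)
    have hcC : (c : ℂ) = (⌊α⌋ : ℂ) + 1 := by rw [hc]; push_cast; ring
    have hsawαC : (saw α : ℂ) = (α : ℂ) - (⌊α⌋ : ℂ) - 1/2 := by
      simp only [saw]; push_cast; ring
    have hsawcC : (saw c : ℂ) = -(1/2) := by rw [hsawc]; push_cast; ring
    rw [hcC] at hparts
    rw [hflc, hsawcC] at hIH
    rw [← hsum, hsingle, hsawαC]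
    linear_combination hIH - hparts + hsplit1 + hsplit2

lemma euler_sub {f f' : ℝ → ℂ} {a b : ℝ} (hab : a ≤ b)
    (hf : ∀ x ∈ Set.Icc a b, HasDerivWithinAt f (f' x) (Set.Icc a b) x)
    (hf' : IntervalIntegrable f' volume a b)
    {m r₂ : ℤ} (hm : 0 < m) {k : ℕ} (hk : 0 < k) :
    ∑ q ∈ Finset.Ioc ⌊(a / (m:ℝ) - (r₂:ℝ)) / (k:ℝ)⌋ ⌊(b / (m:ℝ) - (r₂:ℝ)) / (k:ℝ)⌋,
        f ((m * (r₂ + k * q) : ℤ) : ℝ)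
      = (1 / ((k : ℂ) * (m : ℂ))) * (∫ u in a..b, f u)
        + (∫ u in a..b, (saw ((u / (m:ℝ) - (r₂:ℝ)) / (k:ℝ)) : ℂ) * f' u)
        + f a * (saw ((a / (m:ℝ) - (r₂:ℝ)) / (k:ℝ)) : ℂ)
        - f b * (saw ((b / (m:ℝ) - (r₂:ℝ)) / (k:ℝ)) : ℂ) := by
  have hM : (0:ℝ) < (m:ℝ) := by exact_mod_cast hm
  have hK : (0:ℝ) < (k:ℝ) := by exact_mod_cast hk
  set M : ℝ := (m:ℝ) with hMdef
  set K : ℝ := (k:ℝ) with hKdef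
  set α : ℝ := (a / M - (r₂:ℝ)) / K with hα
  set β : ℝ := (b / M - (r₂:ℝ)) / K with hβ
  set φ : ℝ → ℝ := fun t => M * K * t + M * r₂ with hφ
  have hMK : (0:ℝ) < M * K := mul_pos hM hK
  have hφα : φ α = a := by rw [hφ, hα]; field_simp; ring
  have hφβ : φ β = b := by rw [hφ, hβ]; field_simp; ring
  have hαβ : α ≤ β := by
    rw [hα, hβ]
    gcongr
  have hmaps : Set.MapsTo φ (Set.Icc α β) (Set.Icc a b) := by
    intro t ht
    obtain ⟨h1, h2⟩ := ht
    constructor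
    · rw [← hφα]; simp only [hφ]; nlinarith
    · rw [← hφβ]; simp only [hφ]; nlinarith
  have hφd : ∀ t : ℝ, HasDerivAt φ (M * K) t := by
    intro t
    have := ((hasDerivAt_id t).const_mul (M * K)).add_const (M * (r₂:ℝ))
    simp only [id, mul_one] at this
    exact this
  set g : ℝ → ℂ := fun t => f (φ t) with hg
  set g' : ℝ → ℂ := fun t => ((M * K : ℝ) : ℂ) * f' (φ t) with hg'
  have hgd : ∀ t ∈ Set.Icc α β, HasDerivWithinAt g (g' t) (Set.Icc α β) t := by
    intro t ht
    have := HasDerivWithinAt.scomp (x := t) (hf (φ t) (hmaps ht))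
      ((hφd t).hasDerivWithinAt) hmaps
    exact this.congr_deriv (by simp [hg', Complex.real_smul])
  have hg'i : IntervalIntegrable g' volume α β := by
    have h1 := (hf'.comp_add_right (M * r₂)).comp_mul_left (c := M * K)
    have e1 : (a - M * r₂) / (M * K) = α := by rw [hα]; field_simp
    have e2 : (b - M * r₂) / (M * K) = β := by rw [hβ]; field_simp
    rw [e1, e2] at h1
    exact h1.const_mul _
  have heuler := euler_saw hαβ hgd hg'i
  -- identify the pieces
  have hsum : ∑ n ∈ Finset.Ioc ⌊α⌋ ⌊β⌋, g n
      = ∑ q ∈ Finset.Ioc ⌊α⌋ ⌊β⌋, f ((m * (r₂ + k * q) : ℤ) : ℝ) := by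
    refine Finset.sum_congr rfl fun q _ => ?_
    simp only [hg, hφ, hMdef, hKdef]
    norm_num
    ring_nf
  have hint1 : (∫ t in α..β, g t) = (1 / ((K:ℂ) * M)) * ∫ u in a..b, f u := by
    have := intervalIntegral.integral_comp_mul_add f (ne_of_gt hMK) (M * r₂) (a := α) (b := β)
    simp only [hg, hφ]
    rw [this]
    have e1 : M * K * α + M * r₂ = a := by rw [← hφα]
    have e2 : M * K * β + M * r₂ = b := by rw [← hφβ]
    rw [e1, e2]
    rw [Complex.real_smul]
    push_cast
    rw [one_div]
    ring_nf
  set F : ℝ → ℂ := fun u => (saw ((u / M - (r₂:ℝ)) / K) : ℂ) * f' u with hF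
  have harg : ∀ t : ℝ, ((M * K * t + M * r₂) / M - (r₂:ℝ)) / K = t := by
    intro t; field_simp; ring
  have hFeq : ∀ t : ℝ, (saw t : ℂ) * g' t = ((M * K : ℝ) : ℂ) * F (M * K * t + M * r₂) := by
    intro t
    simp only [hF, hg', harg t]
    ring
  have hint2 : (∫ t in α..β, (saw t : ℂ) * g' t) = ∫ u in a..b, F u := by
    rw [intervalIntegral.integral_congr (g := fun t => ((M*K:ℝ):ℂ) * F (M * K * t + M * r₂))
      (fun t _ => hFeq t)]
    rw [intervalIntegral.integral_const_mul]
    rw [intervalIntegral.integral_comp_mul_add F (ne_of_gt hMK) (M * r₂)]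
    rw [show M * K * α + M * r₂ = a from hφα, show M * K * β + M * r₂ = b from hφβ,
      Complex.real_smul, ← mul_assoc, ← Complex.ofReal_mul,
      mul_inv_cancel₀ (ne_of_gt hMK)]
    simp
  have hgα : g α = f a := by rw [hg]; simp only; rw [hφα]
  have hgβ : g β = f b := by rw [hg]; simp only; rw [hφβ]
  rw [← hsum, heuler, hint1, hint2, hgα, hgβ, hF]
  norm_num
  left
  rw [hMdef, hKdef]
  push_cast
  ring

lemma decomp_unique {k r₂ q r : ℤ} (hk : 0 < k) (h1 : 1 ≤ r₂) (h2 : r₂ ≤ k)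
    (h : r = r₂ + k * q) : (r - 1) / k = q ∧ (r - 1) % k = r₂ - 1 :=
  (Int.ediv_emod_unique hk).2 ⟨by omega, by omega, by omega⟩

lemma claimB {k : ℕ} (hk : 1 ≤ k) (A B : ℝ) (G : ℤ → ℂ) :
    ∑ r ∈ Finset.Ioc ⌊A⌋ ⌊B⌋, G r
      = ∑ r₂ ∈ Finset.Icc (1:ℤ) (k:ℤ),
          ∑ q ∈ Finset.Ioc ⌊(A - (r₂:ℝ)) / (k:ℝ)⌋ ⌊(B - (r₂:ℝ)) / (k:ℝ)⌋, G (r₂ + k * q) := by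
  have hk0 : (0:ℤ) < (k:ℤ) := by exact_mod_cast hk
  have hkR : (0:ℝ) < (k:ℝ) := by exact_mod_cast hk
  rw [Finset.sum_sigma' (Finset.Icc (1:ℤ) (k:ℤ))
    (fun r₂ => Finset.Ioc ⌊(A - (r₂:ℝ)) / (k:ℝ)⌋ ⌊(B - (r₂:ℝ)) / (k:ℝ)⌋)
    (fun r₂ q => G (r₂ + k * q))]
  -- membership characterization
  have hmem : ∀ (r₂ q : ℤ), r₂ ∈ Finset.Icc (1:ℤ) (k:ℤ) →
      (q ∈ Finset.Ioc ⌊(A - (r₂:ℝ)) / (k:ℝ)⌋ ⌊(B - (r₂:ℝ)) / (k:ℝ)⌋ ↔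
        r₂ + k * q ∈ Finset.Ioc ⌊A⌋ ⌊B⌋) := by
    intro r₂ q hr₂
    simp only [Finset.mem_Ioc, Int.floor_lt, Int.le_floor] at *
    constructor
    · rintro ⟨h1, h2⟩
      constructor
      · have := (div_lt_iff₀ hkR).1 h1
        push_cast
        nlinarith
      · have := (le_div_iff₀ hkR).1 h2
        push_cast
        nlinarith
    · rintro ⟨h1, h2⟩
      constructor
      · rw [div_lt_iff₀ hkR]
        push_cast at h1 ⊢
        nlinarith
      · rw [le_div_iff₀ hkR]
        push_cast at h2 ⊢
        nlinarith
  refine Finset.sum_nbij' (i := fun r => ⟨(r - 1) % k + 1, (r - 1) / k⟩)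
    (j := fun p => p.1 + (k:ℤ) * p.2) ?_ ?_ ?_ ?_ ?_
  · intro r hr
    rw [Finset.mem_sigma]
    have he1 : (0:ℤ) ≤ (r - 1) % k := Int.emod_nonneg _ (by omega)
    have he2 : (r - 1) % k < k := Int.emod_lt_of_pos _ hk0
    have hdm : (r - 1) % k + k * ((r - 1) / k) = r - 1 := Int.emod_add_mul_ediv _ _
    have hmem1 : (r - 1) % k + 1 ∈ Finset.Icc (1:ℤ) (k:ℤ) := by
      rw [Finset.mem_Icc]; omega
    refine ⟨hmem1, (hmem _ _ hmem1).2 ?_⟩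
    have he : (r - 1) % k + 1 + (k:ℤ) * ((r - 1) / k) = r := by omega
    rw [he]
    exact hr
  · rintro ⟨r₂, q⟩ hp
    rw [Finset.mem_sigma] at hp
    exact (hmem r₂ q hp.1).1 hp.2
  · intro r hr
    simp only
    have hdm : (r - 1) % k + k * ((r - 1) / k) = r - 1 := Int.emod_add_mul_ediv _ _
    omega
  · rintro ⟨r₂, q⟩ hp
    rw [Finset.mem_sigma, Finset.mem_Icc] at hp
    obtain ⟨⟨h1, h2⟩, _⟩ := hp
    obtain ⟨hq, hr⟩ := decomp_unique hk0 h1 h2 (rfl : r₂ + (k:ℤ) * q = r₂ + (k:ℤ) * q)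
    simp only
    rw [hq, hr]
    simp
  · intro r hr
    simp only
    have hdm : (r - 1) % k + k * ((r - 1) / k) = r - 1 := Int.emod_add_mul_ediv _ _
    congr 1
    omega

lemma claimA {a b : ℝ} (ha0 : 0 ≤ a) (F : ℤ → ℂ) :
    ∑ n ∈ Finset.Ioc ⌊a⌋ ⌊b⌋, ((n.toNat.divisors.card : ℂ)) * F n
      = ∑ m ∈ Finset.Icc (1:ℤ) ⌊b⌋, ∑ r ∈ Finset.Ioc ⌊a / (m:ℝ)⌋ ⌊b / (m:ℝ)⌋, F (m * r) := by
  have hfa : (0:ℤ) ≤ ⌊a⌋ := Int.floor_nonneg.2 ha0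
  have step1 : ∀ n ∈ Finset.Ioc ⌊a⌋ ⌊b⌋,
      ((n.toNat.divisors.card : ℂ)) * F n
        = ∑ m ∈ Finset.Icc (1:ℤ) ⌊b⌋, if m ∣ n then F n else 0 := by
    intro n hn
    rw [Finset.mem_Ioc] at hn
    have hn1 : 1 ≤ n := by omega
    rw [← Finset.sum_filter, Finset.sum_const, nsmul_eq_mul]
    congr 2
    norm_cast
    refine Finset.card_nbij' (i := fun d : ℕ => (d:ℤ)) (j := fun m : ℤ => m.toNat)
      ?_ ?_ ?_ ?_
    · intro d hd
      rw [Finset.mem_coe, Nat.mem_divisors] at hd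
      obtain ⟨hdvd, hne⟩ := hd
      have hd1 : 1 ≤ d := Nat.pos_of_mem_divisors (Nat.mem_divisors.2 ⟨hdvd, hne⟩)
      have hdn : d ≤ n.toNat := Nat.le_of_dvd (by omega) hdvd
      have hcast : ((n.toNat : ℤ)) = n := Int.toNat_of_nonneg (by omega)
      show (d:ℤ) ∈ Finset.filter _ _
      rw [Finset.mem_filter, Finset.mem_Icc]
      refine ⟨⟨by exact_mod_cast hd1, ?_⟩, ?_⟩
      · have h3 : (d:ℤ) ≤ (n.toNat : ℤ) := by exact_mod_cast hdn
        omega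
      · rw [← hcast]
        exact_mod_cast hdvd
    · intro m hm
      rw [Finset.mem_coe, Finset.mem_filter, Finset.mem_Icc] at hm
      obtain ⟨⟨h1, h2⟩, hdvd⟩ := hm
      show m.toNat ∈ _
      rw [Finset.mem_coe, Nat.mem_divisors]
      refine ⟨?_, by omega⟩
      have hmn : ((m.toNat : ℤ)) ∣ ((n.toNat : ℤ)) := by
        rw [Int.toNat_of_nonneg (by omega : (0:ℤ) ≤ m),
          Int.toNat_of_nonneg (by omega : (0:ℤ) ≤ n)]
        exact hdvd
      exact_mod_cast hmn
    · intro d _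
      simp
    · intro m hm
      rw [Finset.mem_coe, Finset.mem_filter, Finset.mem_Icc] at hm
      simp only
      omega
  rw [Finset.sum_congr rfl step1, Finset.sum_comm]
  refine Finset.sum_congr rfl fun m hm => ?_
  rw [Finset.mem_Icc] at hm
  have hm1 : (1:ℤ) ≤ m := hm.1
  have hm0 : m ≠ 0 := by omega
  have hmR : (0:ℝ) < (m:ℝ) := by exact_mod_cast hm1
  have hmem : ∀ r : ℤ, r ∈ Finset.Ioc ⌊a / (m:ℝ)⌋ ⌊b / (m:ℝ)⌋ ↔
      (⌊a⌋ < m * r ∧ m * r ≤ ⌊b⌋) := by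
    intro r
    rw [Finset.mem_Ioc, Int.floor_lt, Int.le_floor, Int.floor_lt, Int.le_floor,
      div_lt_iff₀ hmR, le_div_iff₀ hmR]
    push_cast
    constructor
    · rintro ⟨h1, h2⟩; exact ⟨by nlinarith, by nlinarith⟩
    · rintro ⟨h1, h2⟩; exact ⟨by nlinarith, by nlinarith⟩
  rw [← Finset.sum_filter]
  refine Finset.sum_nbij' (i := fun n => n / m) (j := fun r => m * r) ?_ ?_ ?_ ?_ ?_
  · intro n hn
    rw [Finset.mem_filter, Finset.mem_Ioc] at hn
    obtain ⟨⟨h1, h2⟩, hdvd⟩ := hn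
    rw [hmem, Int.mul_ediv_cancel' hdvd]
    exact ⟨h1, h2⟩
  · intro r hr
    rw [hmem] at hr
    rw [Finset.mem_filter, Finset.mem_Ioc]
    exact ⟨⟨hr.1, hr.2⟩, Dvd.intro _ rfl⟩
  · intro n hn
    rw [Finset.mem_filter] at hn
    exact Int.mul_ediv_cancel' hn.2
  · intro r _
    exact Int.mul_ediv_cancel_left r hm0
  · intro n hn
    rw [Finset.mem_filter] at hn
    rw [Int.mul_ediv_cancel' hn.2]

lemma chi_periodic {χ : ℤ → ℂ} {k : ℕ} (hχ : ∀ n : ℤ, χ (n + (k : ℤ)) = χ n)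
    (n t : ℤ) : χ (n + t * k) = χ n := by
  induction t using Int.induction_on with
  | zero => simp
  | succ i ih =>
    have h := hχ (n + i * k)
    rw [show n + ((i:ℤ) + 1) * k = n + i * k + k by ring]
    rw [h]
    exact ih
  | pred i ih =>
    have h := hχ (n + (-(i:ℤ) - 1) * k)
    rw [show n + (-(i:ℤ) - 1) * k + (k:ℤ) = n + (-(i:ℤ)) * k by ring] at h
    rw [← h]
    exact ih

/-- Sawtooth form of the divisor-and-periodic-weighted Euler formula. -/
theorem divisor_periodic_euler_sawtooth
    (k : ℕ) (hk : 1 ≤ k) (χ : ℤ → ℂ) (hχ : ∀ n : ℤ, χ (n + (k : ℤ)) = χ n)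
    (a b : ℝ) (ha0 : 0 ≤ a) (hab : a < b) (f f' : ℝ → ℂ)
    (hf : ∀ x ∈ Set.Icc a b, HasDerivWithinAt f (f' x) (Set.Icc a b) x)
    (hf' : IntervalIntegrable f' MeasureTheory.volume a b) :
    ∑ n ∈ Finset.Ioc ⌊a⌋ ⌊b⌋, χ n * (n.toNat.divisors.card : ℂ) * f (n : ℝ)
      = ∑ m ∈ Finset.Icc (1 : ℤ) ⌊b⌋, ∑ r₂ ∈ Finset.Icc (1 : ℤ) (k : ℤ),
          χ (m * r₂) *
            ((1 / ((k : ℂ) * (m : ℂ))) * (∫ u in a..b, f u)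
              + (∫ u in a..b, (saw ((u / (m : ℝ) - (r₂ : ℝ)) / (k : ℝ)) : ℂ) * f' u)
              + f a * (saw ((a / (m : ℝ) - (r₂ : ℝ)) / (k : ℝ)) : ℂ)
              - f b * (saw ((b / (m : ℝ) - (r₂ : ℝ)) / (k : ℝ)) : ℂ)) := by
  have h1 : ∑ n ∈ Finset.Ioc ⌊a⌋ ⌊b⌋, χ n * (n.toNat.divisors.card : ℂ) * f (n : ℝ)
      = ∑ n ∈ Finset.Ioc ⌊a⌋ ⌊b⌋, (n.toNat.divisors.card : ℂ) * (χ n * f (n : ℝ)) :=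
    Finset.sum_congr rfl fun n _ => by ring
  rw [h1, claimA ha0 (fun n => χ n * f (n : ℝ))]
  refine Finset.sum_congr rfl fun m hm => ?_
  rw [Finset.mem_Icc] at hm
  have hm1 : (0:ℤ) < m := by omega
  rw [claimB hk (a / (m:ℝ)) (b / (m:ℝ)) (fun r => χ (m * r) * f ((m * r : ℤ) : ℝ))]
  refine Finset.sum_congr rfl fun r₂ hr₂ => ?_
  have hper : ∀ q : ℤ, χ (m * (r₂ + k * q)) = χ (m * r₂) := by
    intro q
    rw [show m * (r₂ + (k:ℤ) * q) = m * r₂ + (m * q) * k by ring]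
    exact chi_periodic hχ (m * r₂) (m * q)
  have h2 : ∑ q ∈ Finset.Ioc ⌊(a / (m:ℝ) - (r₂:ℝ)) / (k:ℝ)⌋ ⌊(b / (m:ℝ) - (r₂:ℝ)) / (k:ℝ)⌋,
        χ (m * (r₂ + k * q)) * f ((m * (r₂ + k * q) : ℤ) : ℝ)
      = χ (m * r₂) * ∑ q ∈ Finset.Ioc ⌊(a / (m:ℝ) - (r₂:ℝ)) / (k:ℝ)⌋
          ⌊(b / (m:ℝ) - (r₂:ℝ)) / (k:ℝ)⌋, f ((m * (r₂ + k * q) : ℤ) : ℝ) := by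
    rw [Finset.mul_sum]
    exact Finset.sum_congr rfl fun q _ => by rw [hper q]
  rw [h2, euler_sub hab.le hf hf' hm1 (by omega : 0 < k)]
end

section
/- Iterated integration by parts against periodized Bernoulli polynomials: Let k ≥ 1 be an integer, l an integer, R ≥ 0 an integer, a < b real numbers, and let f : ℝ → ℂ have continuous derivatives up to order R + 1 on [a,b]. Then ∫_a^b ψ_0((u − l)/k)·f′(u) du = Σ_{r=1}^{R} (−1)^{r+1} k^r ( ψ_r((b − l)/k)·f^{(r)}(b) − ψ_r((a − l)/k)·f^{(r)}(a) ) + (−k)^R ∫_a^b ψ_R((u − l)/k)·f^{(R+1)}(u) du. -/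
open MeasureTheory intervalIntegral

/-- The periodized Bernoulli polynomial `ψ_r(x) = B_{r+1}({x})/(r+1)!`, where `{x}` is the
fractional part of `x` and `B_{r+1}` is the Bernoulli polynomial of degree `r+1`. -/
noncomputable def psir (r : ℕ) (x : ℝ) : ℝ :=
  (Polynomial.aeval (Int.fract x) (Polynomial.bernoulli (r + 1))) / (r + 1).factorial

open Set Polynomial

lemma psir_measurable (r : ℕ) : Measurable (psir r) := by
  unfold psir
  exact ((Polynomial.continuous_aeval
    (p := Polynomial.bernoulli (r+1))).measurable.comp measurable_fract).div_const _

lemma psir_bound (r : ℕ) : ∃ C : ℝ, ∀ x : ℝ, |psir r x| ≤ C := by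
  obtain ⟨C, hC⟩ := (isCompact_Icc (a := (0:ℝ)) (b := 1)).exists_bound_of_continuousOn
    (Polynomial.continuous_aeval (p := Polynomial.bernoulli (r+1))).continuousOn
  refine ⟨C, fun x => ?_⟩
  have h1 : Int.fract x ∈ Icc (0:ℝ) 1 := ⟨Int.fract_nonneg x, (Int.fract_lt_one x).le⟩
  have h2 : |aeval (Int.fract x) (Polynomial.bernoulli (r+1))| ≤ C := by
    simpa [Real.norm_eq_abs] using hC _ h1
  have hfac : (1:ℝ) ≤ ((r+1).factorial : ℝ) := by
    exact_mod_cast Nat.one_le_iff_ne_zero.2 (Nat.factorial_ne_zero _)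
  calc |psir r x| = |aeval (Int.fract x) (Polynomial.bernoulli (r+1))| / ((r+1).factorial : ℝ) := by
        rw [psir, abs_div, abs_of_nonneg (by positivity : (0:ℝ) ≤ ((r+1).factorial : ℝ))]
    _ ≤ |aeval (Int.fract x) (Polynomial.bernoulli (r+1))| :=
        div_le_self (abs_nonneg _) hfac
    _ ≤ C := h2

lemma psir_intervalIntegrable (r : ℕ) (c d : ℝ) (a b : ℝ) :
    IntervalIntegrable (fun u => psir r ((u - c) / d)) volume a b := by
  obtain ⟨C, hC⟩ := psir_bound r
  have hm : Measurable fun u => psir r ((u - c) / d) :=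
    (psir_measurable r).comp ((measurable_id.sub_const c).div_const d)
  refine (_root_.intervalIntegrable_const (c := C)).mono_fun' hm.aestronglyMeasurable ?_
  filter_upwards with x using hC _

lemma psir_intervalIntegrable' (r : ℕ) (c d : ℝ) (a b : ℝ) :
    IntervalIntegrable (fun u => ((psir r ((u - c) / d) : ℝ) : ℂ)) volume a b := by
  refine (psir_intervalIntegrable r c d a b).mono_fun ?_ ?_
  · exact (Complex.measurable_ofReal.comp
      ((psir_measurable r).comp ((measurable_id.sub_const c).div_const d))).aestronglyMeasurable
  · filter_upwards with x
    simp

lemma fract_hasDerivWithinAt (x : ℝ) : HasDerivWithinAt Int.fract 1 (Ioi x) x := by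
  have h1 : HasDerivWithinAt (fun u : ℝ => u - (⌊x⌋ : ℝ)) 1 (Ioi x) x :=
    ((hasDerivAt_id x).sub_const _).hasDerivWithinAt
  refine HasDerivWithinAt.congr_of_eventuallyEq h1 ?_ (by rw [Int.fract])
  filter_upwards [Ioo_mem_nhdsGT_of_mem (Set.left_mem_Ico.2 (Int.lt_floor_add_one x))] with u hu
  have hfl : ⌊u⌋ = ⌊x⌋ := Int.floor_eq_iff.2 ⟨(Int.floor_le x).trans hu.1.le, hu.2⟩
  rw [Int.fract, hfl]

lemma psir_hasDerivWithinAt (r : ℕ) (x : ℝ) :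
    HasDerivWithinAt (psir (r + 1)) (psir r x) (Ioi x) x := by
  have h1 : HasDerivAt (fun y : ℝ => aeval y (bernoulli (r + 2)))
      (aeval (Int.fract x) (Polynomial.derivative (bernoulli (r + 2)))) (Int.fract x) :=
    Polynomial.hasDerivAt_aeval _ _
  have h2 := (h1.comp_hasDerivWithinAt x (fract_hasDerivWithinAt x)).div_const
    (((r + 2).factorial : ℝ))
  have heq : aeval (Int.fract x) (Polynomial.derivative (bernoulli (r + 2))) * 1 /
      ((r + 2).factorial : ℝ) = psir r x := by
    rw [show r + 2 = (r + 1) + 1 from rfl, derivative_bernoulli_add_one, map_mul, mul_one, psir]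
    have hcast : (aeval (Int.fract x) ((((r : ℕ) + 1 : ℕ) : Polynomial ℚ) + 1)) = ((r : ℝ) + 2) := by
      simp only [map_add, map_natCast, map_one]
      push_cast
      ring
    rw [hcast]
    have hfac : ((r + 2).factorial : ℝ) = ((r : ℝ) + 2) * ((r + 1).factorial : ℝ) := by
      rw [show r + 2 = (r + 1) + 1 from rfl, Nat.factorial_succ]
      push_cast
      ring
    rw [hfac]
    have h2pos : ((r : ℝ) + 2) ≠ 0 := by positivity
    have hfp : ((r + 1).factorial : ℝ) ≠ 0 := by positivity
    field_simp
    try ring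
  have hfun : psir (r + 1) = fun u : ℝ =>
      (fun y : ℝ => aeval y (bernoulli (r + 2))) (Int.fract u) / ((r + 2).factorial : ℝ) := by
    funext u
    rw [psir]
    try norm_num
  rw [hfun, ← heq]
  exact h2

lemma psir_continuous (r : ℕ) : Continuous (psir (r + 1)) := by
  have key : Continuous ((fun t : ℝ =>
      (aeval t (bernoulli (r + 2)) : ℝ) / ((r + 2).factorial : ℝ)) ∘ Int.fract) := by
    apply ContinuousOn.comp_fract''
    · exact ((Polynomial.continuous_aeval
        (p := Polynomial.bernoulli (r+2))).div_const _).continuousOn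
    · have h0 : (aeval (0:ℝ)) (Polynomial.bernoulli (r + 2)) =
          algebraMap ℚ ℝ ((Polynomial.bernoulli (r + 2)).eval 0) := by
        rw [aeval_def, eval₂_eq_eval_map]
        exact Polynomial.eval_zero_map _ _
      have h1 : (aeval (1:ℝ)) (Polynomial.bernoulli (r + 2)) =
          algebraMap ℚ ℝ ((Polynomial.bernoulli (r + 2)).eval 1) := by
        rw [aeval_def, eval₂_eq_eval_map]
        exact Polynomial.eval_one_map _ _
      simp only [h0, h1, Polynomial.bernoulli_eval_zero, Polynomial.bernoulli_eval_one]
      rw [bernoulli_eq_bernoulli'_of_ne_one (by omega)]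
  have hfun : psir (r + 1) = (fun t : ℝ =>
      (aeval t (bernoulli (r + 2)) : ℝ) / ((r + 2).factorial : ℝ)) ∘ Int.fract := by
    funext u
    rw [psir, Function.comp_apply]
    try norm_num
  rw [hfun]
  exact key

lemma ofReal_hasDerivWithinAt {f : ℝ → ℝ} {u x : ℝ} {s : Set ℝ}
    (hf : HasDerivWithinAt f u s x) :
    HasDerivWithinAt (fun y => ((f y : ℝ) : ℂ)) (u : ℂ) s x := by
  simpa [Function.comp_def] using Complex.ofRealCLM.hasFDerivAt.comp_hasDerivWithinAt x hf

lemma key_step (k : ℕ) (hk : 1 ≤ k) (l : ℤ) (R : ℕ) (a b : ℝ) (hab : a < b)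
    (f : ℝ → ℂ) (hf : ContDiffOn ℝ (R + 1 + 1) f (Set.Icc a b)) :
    (∫ u in a..b, (psir R ((u - (l : ℝ)) / (k : ℝ)) : ℂ) *
        iteratedDerivWithin (R + 1) f (Set.Icc a b) u)
      = (k : ℂ) * ((psir (R + 1) ((b - (l : ℝ)) / (k : ℝ)) : ℂ) *
            iteratedDerivWithin (R + 1) f (Set.Icc a b) b
          - (psir (R + 1) ((a - (l : ℝ)) / (k : ℝ)) : ℂ) *
            iteratedDerivWithin (R + 1) f (Set.Icc a b) a)
        - (k : ℂ) * ∫ u in a..b, (psir (R + 1) ((u - (l : ℝ)) / (k : ℝ)) : ℂ) *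
            iteratedDerivWithin (R + 1 + 1) f (Set.Icc a b) u := by
  have hkpos : (0:ℝ) < (k : ℝ) := by exact_mod_cast hk
  have hk0 : (k : ℝ) ≠ 0 := hkpos.ne'
  have hkC : (k : ℂ) ≠ 0 := by exact_mod_cast hk0
  have hud : UniqueDiffOn ℝ (Set.Icc a b) := uniqueDiffOn_Icc hab
  have hFc : ContinuousOn (iteratedDerivWithin (R + 1) f (Set.Icc a b)) (Set.Icc a b) :=
    hf.continuousOn_iteratedDerivWithin (by exact_mod_cast Nat.le_succ (R + 1)) hud
  have hF'c : ContinuousOn (iteratedDerivWithin (R + 1 + 1) f (Set.Icc a b)) (Set.Icc a b) :=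
    hf.continuousOn_iteratedDerivWithin (by exact_mod_cast le_refl (R + 1 + 1)) hud
  have hFd : DifferentiableOn ℝ (iteratedDerivWithin (R + 1) f (Set.Icc a b)) (Set.Icc a b) :=
    hf.differentiableOn_iteratedDerivWithin
      (by exact_mod_cast Nat.lt_succ_self (R + 1)) hud
  have hFder : ∀ x ∈ Ioo a b, HasDerivAt (iteratedDerivWithin (R + 1) f (Set.Icc a b))
      (iteratedDerivWithin (R + 1 + 1) f (Set.Icc a b) x) x := by
    intro x hx
    have hx' : x ∈ Set.Icc a b := Ioo_subset_Icc_self hx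
    have h2 : iteratedDerivWithin (R + 1 + 1) f (Set.Icc a b) x =
        derivWithin (iteratedDerivWithin (R + 1) f (Set.Icc a b)) (Set.Icc a b) x :=
      congrFun iteratedDerivWithin_succ x
    rw [h2]
    exact ((hFd x hx').hasDerivWithinAt).hasDerivAt (Icc_mem_nhds hx.1 hx.2)
  have hψder : ∀ x : ℝ, HasDerivWithinAt
      (fun u : ℝ => psir (R + 1) ((u - (l : ℝ)) / (k : ℝ)))
      (psir R ((x - (l : ℝ)) / (k : ℝ)) / k) (Set.Ioi x) x := by
    intro x
    have hinner : HasDerivWithinAt (fun u : ℝ => (u - (l : ℝ)) / (k : ℝ)) (1 / k)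
        (Set.Ioi x) x := by
      simpa using (((hasDerivAt_id x).sub_const (l : ℝ)).div_const (k : ℝ)).hasDerivWithinAt
    have hmaps : Set.MapsTo (fun u : ℝ => (u - (l : ℝ)) / (k : ℝ)) (Set.Ioi x)
        (Set.Ioi ((x - (l : ℝ)) / (k : ℝ))) := by
      intro u hu
      have : x - (l : ℝ) < u - (l : ℝ) := by simpa using hu
      exact div_lt_div_of_pos_right this hkpos
    have := (psir_hasDerivWithinAt R ((x - (l : ℝ)) / (k : ℝ))).comp x hinner hmaps
    simpa [div_eq_mul_inv, Function.comp_def] using this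
  set g : ℝ → ℂ := fun u => ((psir (R + 1) ((u - (l : ℝ)) / (k : ℝ)) : ℝ) : ℂ) *
      iteratedDerivWithin (R + 1) f (Set.Icc a b) u with hg
  set g' : ℝ → ℂ := fun u => ((psir R ((u - (l : ℝ)) / (k : ℝ)) / k : ℝ) : ℂ) *
      iteratedDerivWithin (R + 1) f (Set.Icc a b) u +
      ((psir (R + 1) ((u - (l : ℝ)) / (k : ℝ)) : ℝ) : ℂ) *
      iteratedDerivWithin (R + 1 + 1) f (Set.Icc a b) u with hg'
  have hgcont : ContinuousOn g (Set.Icc a b) := by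
    apply ContinuousOn.mul _ hFc
    exact (Complex.continuous_ofReal.comp ((psir_continuous R).comp
      (by continuity))).continuousOn
  have hgderiv : ∀ x ∈ Ioo a b, HasDerivWithinAt g (g' x) (Set.Ioi x) x := by
    intro x hx
    exact (ofReal_hasDerivWithinAt (hψder x)).mul ((hFder x hx).hasDerivWithinAt)
  have hint1 : IntervalIntegrable (fun u => ((psir R ((u - (l : ℝ)) / (k : ℝ)) / k : ℝ) : ℂ) *
      iteratedDerivWithin (R + 1) f (Set.Icc a b) u) volume a b := by
    apply IntervalIntegrable.mul_continuousOn
    · have := (psir_intervalIntegrable' R (l : ℝ) (k : ℝ) a b).div_const (k : ℂ)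
      simpa [Complex.ofReal_div] using this
    · rwa [Set.uIcc_of_le hab.le]
  have hint2 : IntervalIntegrable (fun u => ((psir (R + 1) ((u - (l : ℝ)) / (k : ℝ)) : ℝ) : ℂ) *
      iteratedDerivWithin (R + 1 + 1) f (Set.Icc a b) u) volume a b := by
    apply IntervalIntegrable.mul_continuousOn
    · exact psir_intervalIntegrable' (R + 1) (l : ℝ) (k : ℝ) a b
    · rwa [Set.uIcc_of_le hab.le]
  have hFTC : ∫ u in a..b, g' u = g b - g a :=
    integral_eq_sub_of_hasDeriv_right_of_le hab.le hgcont hgderiv (hint1.add hint2)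
  rw [hg'] at hFTC
  rw [integral_add hint1 hint2] at hFTC
  have hsplit : (∫ u in a..b, ((psir R ((u - (l : ℝ)) / (k : ℝ)) / k : ℝ) : ℂ) *
      iteratedDerivWithin (R + 1) f (Set.Icc a b) u)
      = (∫ u in a..b, ((psir R ((u - (l : ℝ)) / (k : ℝ)) : ℝ) : ℂ) *
          iteratedDerivWithin (R + 1) f (Set.Icc a b) u) / (k : ℂ) := by
    rw [← intervalIntegral.integral_div]
    congr 1
    funext u
    push_cast
    ring
  rw [hsplit] at hFTC
  rw [hg] at hFTC
  field_simp at hFTC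
  linear_combination hFTC

/-- Iterated integration by parts against periodized Bernoulli polynomials. -/
theorem iterated_parts_bernoulli
    (k : ℕ) (hk : 1 ≤ k) (l : ℤ) (R : ℕ) (a b : ℝ) (hab : a < b)
    (f : ℝ → ℂ) (hf : ContDiffOn ℝ (R + 1) f (Set.Icc a b)) :
    (∫ u in a..b, (psir 0 ((u - (l : ℝ)) / (k : ℝ)) : ℂ) *
        iteratedDerivWithin 1 f (Set.Icc a b) u)
      = (∑ r ∈ Finset.Icc 1 R, (-1 : ℂ) ^ (r + 1) * (k : ℂ) ^ r *
          ((psir r ((b - (l : ℝ)) / (k : ℝ)) : ℂ) * iteratedDerivWithin r f (Set.Icc a b) b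
            - (psir r ((a - (l : ℝ)) / (k : ℝ)) : ℂ) * iteratedDerivWithin r f (Set.Icc a b) a))
        + (-(k : ℂ)) ^ R *
            ∫ u in a..b, (psir R ((u - (l : ℝ)) / (k : ℝ)) : ℂ) *
              iteratedDerivWithin (R + 1) f (Set.Icc a b) u := by
  induction R with
  | zero => simp
  | succ R ih =>
    have hf2 : ContDiffOn ℝ (R + 1 + 1) f (Set.Icc a b) := by exact_mod_cast hf
    have hf' : ContDiffOn ℝ (R + 1) f (Set.Icc a b) :=
      hf2.of_le (by exact_mod_cast Nat.le_succ (R + 1))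
    rw [ih hf', key_step k hk l R a b hab f hf2,
      Finset.sum_Icc_succ_top (by omega : 1 ≤ R + 1)]
    ring
end
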